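/- arXiv:2108.06020 — 5 statements merged into one kernel-verified Lean document; each statement's English description precedes it below -/
import Mathlib

section
/- If X is homeomorphic to the closed unit interval [0,1], then the hyperspace NC*(X) = {A ∈ C(X) : X \ A is connected}, with the Hausdorff metric, is homeomorphic to X. -/
open TopologicalSpace Topology Metric Set

universe u
variable {X : Type u}

noncomputable def ptOrder [TopologicalSpace X] (p : X) : Cardinal :=
  Cardinal.mk (ConnectedComponents (({p}ᶜ : Set X)))

def endpoints (X : Type u) [TopologicalSpace X] : Set X := {p | ptOrder p = 1}

def ramificationPoints (X : Type u) [TopologicalSpace X] : Set X := {p | 3 ≤ ptOrder p}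

def IsSubcontinuum [TopologicalSpace X] (A : Set X) : Prop := IsClosed A ∧ IsConnected A

def NoSimpleClosedCurve (X : Type u) [TopologicalSpace X] : Prop :=
  ¬ ∃ f : AddCircle (1 : ℝ) → X, IsEmbedding f

def NCstar (X : Type u) [MetricSpace X] : Set (NonemptyCompacts X) :=
  {A | IsConnected (A : Set X) ∧ IsPreconnected ((A : Set X)ᶜ)}

def IsArc [TopologicalSpace X] (A : Set X) (x y : X) : Prop :=
  ∃ f : Set.Icc (0 : ℝ) 1 → X, IsEmbedding f ∧ Set.range f = A ∧
    f ⟨0, by norm_num⟩ = x ∧ f ⟨1, by norm_num⟩ = y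

def IsFiniteGraph (X : Type u) [TopologicalSpace X] : Prop :=
  ∃ (n : ℕ) (A : Fin n → Set X) (e₀ e₁ : Fin n → X),
    (∀ i, IsArc (A i) (e₀ i) (e₁ i)) ∧ (⋃ i, A i) = Set.univ ∧
    ∀ i j, i ≠ j → A i ∩ A j ⊆ ({e₀ i, e₁ i} : Set X) ∩ {e₀ j, e₁ j}

def ZeroDim (Y : Type*) [TopologicalSpace Y] : Prop :=
  ∀ (y : Y) (U : Set Y), IsOpen U → y ∈ U → ∃ V : Set Y, IsClopen V ∧ y ∈ V ∧ V ⊆ U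

/-! Read through `X ≃ₜ [0, 1] ⊆ ℝ`, a subcontinuum of `X` is an interval `[a, b] ⊆ [0, 1]`,
and its complement is connected exactly when `a = 0` or `b = 1`. These intervals form an arc:
`t ↦ [max (t - 1) 0, min t 1]` (that is, `[0, t]` and then `[t - 1, 1]`) is a 1-Lipschitz
bijection for the Hausdorff metric from `[0, 2]` onto them, hence a homeomorphism by
compactness. -/

theorem Real.hausdorffDist_Icc_le {a b c d : ℝ} (hab : a ≤ b) (hcd : c ≤ d) :
    hausdorffDist (Icc a b) (Icc c d) ≤ max |a - c| |b - d| := by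
  have clamp : ∀ {a b c d : ℝ}, c ≤ d → ∀ x ∈ Icc a b,
      ∃ y ∈ Icc c d, dist x y ≤ max |a - c| |b - d| := by
    intro a b c d hcd x hx
    refine ⟨max c (min x d), ⟨le_max_left _ _, max_le hcd (min_le_right _ _)⟩, ?_⟩
    -- `x` is its own clamp into `[a, b]`, and clamping is 1-Lipschitz in the endpoints
    have hx' : max a (min x b) = x := by rw [min_eq_left hx.2, max_eq_right hx.1]
    calc dist x (max c (min x d)) = |max a (min x b) - max c (min x d)| := by
          rw [hx', Real.dist_eq]
      _ ≤ max |a - c| |min x b - min x d| := abs_max_sub_max_le_max _ _ _ _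
      _ ≤ max |a - c| |b - d| :=
          max_le_max le_rfl (by simpa using abs_min_sub_min_le_max x b x d)
  refine hausdorffDist_le_of_mem_dist (by positivity) (clamp hcd) fun x hx => ?_
  simpa only [abs_sub_comm] using clamp hab x hx

theorem mem_NCstar_iff_of_isEmbedding [MetricSpace X] {Y : Type*} [TopologicalSpace Y]
    {f : X → Y} (hf : IsEmbedding f) {A : NonemptyCompacts X} :
    A ∈ NCstar X ↔ IsConnected (f '' A) ∧ IsPreconnected (range f \ f '' A) := by
  rw [← image_compl_eq_range_sdiff_image hf.injective, hf.isInducing.isPreconnected_image]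
  simp only [NCstar, mem_ofPred_eq, IsConnected, image_nonempty,
    hf.isInducing.isPreconnected_image]

def endInterval (t : Icc (0 : ℝ) 2) : NonemptyCompacts ℝ :=
  ⟨⟨Icc (max (t - 1) 0) (min t 1), isCompact_Icc⟩,
    nonempty_Icc.2 <| max_le (le_min (by linarith [t.2.1]) (by linarith [t.2.2]))
      (le_min t.2.1 zero_le_one)⟩

theorem coe_endInterval (t : Icc (0 : ℝ) 2) :
    (endInterval t : Set ℝ) = Icc (max ((t : ℝ) - 1) 0) (min (t : ℝ) 1) := rfl

theorem endInterval_subset_Icc (t : Icc (0 : ℝ) 2) : (endInterval t : Set ℝ) ⊆ Icc 0 1 :=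
  Icc_subset_Icc (le_max_right _ _) (min_le_right _ _)

theorem endInterval_injective : Function.Injective endInterval := by
  intro s t hst
  have hsum : ∀ t : Icc (0 : ℝ) 2, max ((t : ℝ) - 1) 0 + min (t : ℝ) 1 = t := by
    intro t
    rcases le_total (t : ℝ) 1 with h | h
    · rw [max_eq_right (by linarith), min_eq_left h, zero_add]
    · rw [max_eq_left (by linarith), min_eq_right h, sub_add_cancel]
  have hends := (Icc_eq_Icc_iff (nonempty_Icc.1 (endInterval s).nonempty)).1
    (congrArg SetLike.coe hst)
  exact Subtype.ext <| by rw [← hsum s, ← hsum t, hends.1, hends.2]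

theorem lipschitzWith_endInterval : LipschitzWith 1 endInterval := by
  refine LipschitzWith.of_dist_le_mul fun s t => ?_
  rw [NonemptyCompacts.dist_eq, NNReal.coe_one, one_mul, Subtype.dist_eq, Real.dist_eq]
  refine (Real.hausdorffDist_Icc_le (nonempty_Icc.1 (endInterval s).nonempty)
    (nonempty_Icc.1 (endInterval t).nonempty)).trans (max_le ?_ ?_)
  · simpa using abs_max_sub_max_le_abs ((s : ℝ) - 1) (t - 1) 0
  · simpa using abs_min_sub_min_le_max (s : ℝ) 1 t 1

theorem isPreconnected_Icc_diff_endInterval (t : Icc (0 : ℝ) 2) :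
    IsPreconnected (Icc 0 1 \ (endInterval t : Set ℝ)) := by
  rw [coe_endInterval]
  rcases le_total (t : ℝ) 1 with h | h
  · have : Icc 0 1 \ Icc (max ((t : ℝ) - 1) 0) (min (t : ℝ) 1) = Ioc (t : ℝ) 1 := by
      rw [max_eq_right (by linarith), min_eq_left h]
      ext x; simp only [mem_sdiff, mem_Icc, mem_Ioc]; constructor <;> grind
    rw [this]; exact isPreconnected_Ioc
  · have : Icc 0 1 \ Icc (max ((t : ℝ) - 1) 0) (min (t : ℝ) 1) = Ico 0 ((t : ℝ) - 1) := by
      rw [max_eq_left (by linarith), min_eq_right h]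
      ext x; simp only [mem_sdiff, mem_Icc, mem_Ico]; constructor <;> grind [t.2.2]
    rw [this]; exact isPreconnected_Ico

theorem exists_endInterval_eq {B : Set ℝ} (hB : B ⊆ Icc 0 1) (hcompact : IsCompact B)
    (hconn : IsConnected B) (hcompl : IsPreconnected (Icc 0 1 \ B)) :
    ∃ t, (endInterval t : Set ℝ) = B := by
  set a := sInf B
  set b := sSup B
  have hab : B = Icc a b := eq_Icc_of_connected_compact hconn hcompact
  have ha : a ∈ B := hcompact.sInf_mem hconn.nonempty
  have hb : b ∈ B := hcompact.sSup_mem hconn.nonempty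
  have ha0 : 0 ≤ a := (hB ha).1
  have hb1 : b ≤ 1 := (hB hb).2
  have hle : a ≤ b := by rw [hab] at ha; exact ha.2
  -- otherwise `0` and `1` lie in the complement of `B` but `a` between them does not
  have hend : a = 0 ∨ b = 1 := by
    by_contra! hne
    have h0 : (0 : ℝ) ∈ Icc 0 1 \ B := ⟨⟨le_rfl, zero_le_one⟩, fun h => by
      rw [hab] at h; exact hne.1 (le_antisymm h.1 ha0)⟩
    have h1 : (1 : ℝ) ∈ Icc 0 1 \ B := ⟨⟨zero_le_one, le_rfl⟩, fun h => by
      rw [hab] at h; exact hne.2 (le_antisymm hb1 h.2)⟩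
    exact (hcompl.Icc_subset h0 h1 ⟨ha0, hle.trans hb1⟩).2 ha
  have hlo : max (a + b - 1) 0 = a := by
    rcases hend with h | h
    · rw [h, max_eq_right (by linarith)]
    · rw [h, add_sub_cancel_right, max_eq_left ha0]
  have hhi : min (a + b) 1 = b := by
    rcases hend with h | h
    · rw [h, zero_add, min_eq_left hb1]
    · rw [h, min_eq_right (by linarith)]
  refine ⟨⟨a + b, by constructor <;> linarith⟩, ?_⟩
  rw [coe_endInterval, hab]
  exact congrArg₂ Icc hlo hhi

section Embedded

variable [MetricSpace X] {f : X → ℝ} (hf : IsClosedEmbedding f) (hrange : range f = Icc 0 1)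

def preimageEndInterval (t : Icc (0 : ℝ) 2) : NonemptyCompacts X :=
  ⟨⟨f ⁻¹' endInterval t, hf.isCompact_preimage (endInterval t).isCompact⟩, by
    obtain ⟨x, hx⟩ := (endInterval t).nonempty
    obtain ⟨y, rfl⟩ : x ∈ range f := hrange ▸ endInterval_subset_Icc t hx
    exact ⟨y, hx⟩⟩

theorem image_preimageEndInterval (t : Icc (0 : ℝ) 2) :
    f '' preimageEndInterval hf hrange t = endInterval t :=
  image_preimage_eq_of_subset (hrange ▸ endInterval_subset_Icc t)

theorem preimageEndInterval_mem_NCstar (t : Icc (0 : ℝ) 2) :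
    preimageEndInterval hf hrange t ∈ NCstar X := by
  rw [mem_NCstar_iff_of_isEmbedding hf.isEmbedding, image_preimageEndInterval, hrange]
  exact ⟨isConnected_Icc (nonempty_Icc.1 (endInterval t).nonempty),
    isPreconnected_Icc_diff_endInterval t⟩

theorem preimageEndInterval_injective : Function.Injective (preimageEndInterval hf hrange) := by
  intro s t hst
  apply endInterval_injective
  apply SetLike.coe_injective
  rw [← image_preimageEndInterval hf hrange, hst, image_preimageEndInterval]

theorem exists_preimageEndInterval_eq {A : NonemptyCompacts X} (hA : A ∈ NCstar X) :
    ∃ t, preimageEndInterval hf hrange t = A := by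
  rw [mem_NCstar_iff_of_isEmbedding hf.isEmbedding, hrange] at hA
  obtain ⟨t, ht⟩ := exists_endInterval_eq (hrange ▸ image_subset_range f A)
    (A.isCompact.image hf.continuous) hA.1 hA.2
  exact ⟨t, NonemptyCompacts.ext <|
    (congrArg (f ⁻¹' ·) ht).trans (preimage_image_eq _ hf.injective)⟩

theorem continuous_preimageEndInterval : Continuous (preimageEndInterval hf hrange) := by
  -- the Hausdorff metric induces the Vietoris topology, for which `K ↦ f '' K` is an embedding
  have hmap : NonemptyCompacts.map f hf.continuous ∘ preimageEndInterval hf hrange =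
      endInterval :=
    funext fun t => NonemptyCompacts.ext (image_preimageEndInterval hf hrange t)
  rw [hf.nonemptyCompacts_map.isInducing.continuous_iff, hmap]
  exact lipschitzWith_endInterval.continuous

noncomputable def homeomorphNCstar : Icc (0 : ℝ) 2 ≃ₜ NCstar X :=
  Continuous.homeoOfEquivCompactToT2
    (f := Equiv.ofBijective (fun t => ⟨_, preimageEndInterval_mem_NCstar hf hrange t⟩)
      ⟨fun _ _ h => preimageEndInterval_injective hf hrange (congrArg Subtype.val h),
        fun A => (exists_preimageEndInterval_eq hf hrange A.2).imp fun _ h => Subtype.ext h⟩)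
    ((continuous_preimageEndInterval hf hrange).subtype_mk _)

end Embedded

theorem NCstar_of_interval_general [MetricSpace X]
    (h : Nonempty (X ≃ₜ Set.Icc (0 : ℝ) 1)) :
    Nonempty (↥(NCstar X) ≃ₜ X) := by
  obtain ⟨e⟩ := h
  have hf : IsClosedEmbedding ((↑) ∘ e : X → ℝ) :=
    isClosed_Icc.isClosedEmbedding_subtypeVal.comp e.isClosedEmbedding
  have hrange : range ((↑) ∘ e : X → ℝ) = Icc 0 1 := by
    rw [range_comp, e.range_coe, image_univ, Subtype.range_coe]
  exact ⟨(homeomorphNCstar hf hrange).symm.trans ((iccHomeoI 0 2 two_pos).trans e.symm)⟩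

theorem NCstar_of_interval [MetricSpace X] [CompactSpace X] [ConnectedSpace X] [Nontrivial X]
    (h : Nonempty (X ≃ₜ Set.Icc (0 : ℝ) 1)) :
    Nonempty (↥(NCstar X) ≃ₜ X) :=
  NCstar_of_interval_general h
end

section
/- Let X be a tree. The hyperspace NC*(X) is connected if and only if X is homeomorphic to the interval [0,1]. -/
open TopologicalSpace Topology Metric Set

universe u
variable {X : Type u}

/-!
If `h : X ≃ₜ [0, 1]`, every member of `NC*(X)` is an initial segment `h⁻¹[0, t]` or a final
segment `h⁻¹[t, 1]`: its image under `h` is an interval whose complement is connected. Both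
families are continuous paths in the hyperspace through `X`, so `NC*(X)` is connected.

Conversely, write `X` as a union of arcs meeting only at endpoints. If no point lies on three
arcs, two arcs through a common point glue into one arc (a second common point would give a simple
closed curve), and induction on the number of arcs shows that `X` is an arc. Otherwise a point `p`
lies on three arcs. Call two arcs linked if they meet away from `p`. A chain of linked arcs from one
arc through `p` to another, shortened as far as possible, glues into a simple closed curve; so the
arcs through `p` lie in different linkage classes, and these classes cut `X \ {p}` into disjoint
open branches, at least three of them. A member of `NC*(X)` through `p` has a connected complement,
so it contains two whole branches; every member close to it meets both branches and, being
connected, passes through `p`. Hence the members through `p` form a clopen part of `NC*(X)`. It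
contains `X` and misses the continuum made of one branch with the half of its arc at `p` removed.
-/

theorem pair_subset_pair_of_ne {α : Type*} {a b w w' : α} (hw : w ∈ ({a, b} : Set α))
    (hw' : w' ∈ ({a, b} : Set α)) (hne : w ≠ w') : ({a, b} : Set α) ⊆ {w, w'} := by
  rintro v (rfl | rfl) <;> rcases hw with rfl | rfl <;> rcases hw' with rfl | rfl <;> simp_all

theorem Relation.ReflTransGen.exists_seq {α : Type*} {r : α → α → Prop} {a b : α}
    (h : Relation.ReflTransGen r a b) :
    ∃ (m : ℕ) (k : ℕ → α), k 0 = a ∧ k m = b ∧ ∀ t < m, r (k t) (k (t + 1)) := by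
  induction h with
  | refl => exact ⟨0, fun _ => a, rfl, rfl, fun t ht => absurd ht (Nat.not_lt_zero t)⟩
  | @tail c d _ hcd ih =>
    obtain ⟨m, k, hk0, hkm, hk⟩ := ih
    refine ⟨m + 1, fun t => if t ≤ m then k t else d, by simpa using hk0, by simp, fun t ht => ?_⟩
    rcases Nat.lt_or_ge t m with htm | htm
    · simpa [htm.le, show t + 1 ≤ m by omega] using hk t htm
    · obtain rfl : t = m := by omega
      simpa [hkm] using hcd

theorem Relation.ReflTransGen.mono_reachable {α : Type*} {r q : α → α → Prop} {a b : α}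
    (hq : ∀ u v, Relation.ReflTransGen r a u → r u v → q u v)
    (h : Relation.ReflTransGen r a b) : Relation.ReflTransGen q a b := by
  induction h with
  | refl => exact .refl
  | tail hau huv ih => exact ih.tail (hq _ _ hau huv)

theorem IsPreconnected.biUnion_of_reflTransGen_of_base [TopologicalSpace X] {ι : Type*}
    {t : Set ι} {s : ι → Set X} {a : ι} (H : ∀ i ∈ t, IsPreconnected (s i))
    (K : ∀ i ∈ t, Relation.ReflTransGen (fun u v => (s u ∩ s v).Nonempty ∧ u ∈ t ∧ v ∈ t) a i) :
    IsPreconnected (⋃ i ∈ t, s i) := by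
  refine IsPreconnected.biUnion_of_reflTransGen H fun i hi j hj => ?_
  have hback : Relation.ReflTransGen (fun u v => (s u ∩ s v).Nonempty ∧ u ∈ t ∧ v ∈ t) i a :=
    (Relation.reflTransGen_swap.2 (K i hi)).mono_reachable
      fun u v _ ⟨⟨x, hxv, hxu⟩, hv, hu⟩ => ⟨⟨x, hxu, hxv⟩, hu, hv⟩
  exact (hback.trans (K j hj)).mono_reachable fun u v _ h => ⟨h.1, h.2.1⟩

theorem exists_inter_nonempty_of_iUnion_eq_univ [TopologicalSpace X] [PreconnectedSpace X]
    {ι : Type*} [Finite ι] {A : ι → Set X} (hcl : ∀ i, IsClosed (A i)) (hcov : ⋃ i, A i = univ)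
    {S : Set ι} (hS : ∃ i ∈ S, (A i).Nonempty) (hS' : ∃ i ∉ S, (A i).Nonempty) :
    ∃ i ∈ S, ∃ j ∉ S, (A i ∩ A j).Nonempty := by
  have hclosed : ∀ T : Set ι, IsClosed (⋃ i ∈ T, A i) := fun T =>
    T.toFinite.isClosed_biUnion fun i _ => hcl i
  have hsplit : univ ⊆ (⋃ i ∈ S, A i) ∪ ⋃ i ∈ Sᶜ, A i := by
    rw [← biUnion_union, union_compl_self, biUnion_univ, hcov]
  obtain ⟨i, hi, x, hx⟩ := hS
  obtain ⟨j, hj, y, hy⟩ := hS'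
  obtain ⟨z, -, hzS, hzS'⟩ := isPreconnected_closed_iff.1 isPreconnected_univ _ _
    (hclosed S) (hclosed Sᶜ) hsplit ⟨x, trivial, mem_biUnion hi hx⟩
    ⟨y, trivial, mem_biUnion (show j ∈ Sᶜ from hj) hy⟩
  obtain ⟨i', hi', hzi⟩ := mem_iUnion₂.1 hzS
  obtain ⟨j', hj', hzj⟩ := mem_iUnion₂.1 hzS'
  exact ⟨i', hi', j', hj', z, hzi, hzj⟩

theorem IsPreconnected.eq_of_inter_nonempty [TopologicalSpace X] {ι : Type*} {D : ι → Set X}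
    {S : Set X} (hS : IsPreconnected S) (hDo : ∀ i, IsOpen (D i))
    (hDd : Pairwise (Function.onFun Disjoint D)) (hSD : S ⊆ ⋃ i, D i) {i j : ι}
    (hi : (S ∩ D i).Nonempty) (hj : (S ∩ D j).Nonempty) : i = j := by
  by_contra hij
  have hsplit : S ⊆ D i ∪ ⋃ k ∈ ({i}ᶜ : Set ι), D k := fun x hx => by
    obtain ⟨k, hk⟩ := mem_iUnion.1 (hSD hx)
    rcases eq_or_ne k i with rfl | hki
    · exact Or.inl hk
    · exact Or.inr (mem_biUnion hki hk)
  have hSi := hS.subset_left_of_subset_union (hDo i) (isOpen_biUnion fun k _ => hDo k)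
    (disjoint_iUnion₂_right.2 fun k hk => hDd (Ne.symm hk)) hsplit hi
  obtain ⟨x, hxS, hxj⟩ := hj
  exact (hDd hij).le_bot ⟨hSi hxS, hxj⟩

section Arcs
variable [TopologicalSpace X] {A B : Set X} {p x y z : X}

theorem isArc_iff_exists_path [T2Space X] :
    IsArc A x y ↔ ∃ γ : Path x y, Function.Injective γ ∧ range γ = A := by
  constructor
  · rintro ⟨f, hf, rfl, rfl, rfl⟩
    exact ⟨⟨⟨f, hf.continuous⟩, rfl, rfl⟩, hf.injective, rfl⟩
  · rintro ⟨γ, hγ, rfl⟩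
    exact ⟨γ, (γ.continuous.isClosedEmbedding hγ).isEmbedding, rfl, γ.source, γ.target⟩

namespace IsArc

theorem left_mem (h : IsArc A x y) : x ∈ A := by
  obtain ⟨f, -, rfl, rfl, -⟩ := h
  exact mem_range_self _

theorem right_mem (h : IsArc A x y) : y ∈ A := by
  obtain ⟨f, -, rfl, -, rfl⟩ := h
  exact mem_range_self _

theorem ne (h : IsArc A x y) : x ≠ y := by
  obtain ⟨f, hf, -, rfl, rfl⟩ := h
  exact fun h01 => zero_ne_one (congrArg Subtype.val (hf.injective h01))

theorem isCompact (h : IsArc A x y) : IsCompact A := by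
  obtain ⟨f, hf, rfl, -, -⟩ := h
  exact isCompact_range hf.continuous

theorem isClosed [T2Space X] (h : IsArc A x y) : IsClosed A := h.isCompact.isClosed

theorem isPreconnected (h : IsArc A x y) : IsPreconnected A := by
  obtain ⟨f, hf, rfl, -, -⟩ := h
  exact isPreconnected_range hf.continuous

theorem nonempty (h : IsArc A x y) : A.Nonempty := ⟨x, h.left_mem⟩

theorem diff_singleton_nonempty (h : IsArc A x y) (p : X) : (A \ {p}).Nonempty := by
  by_cases hx : x = p
  · exact ⟨y, h.right_mem, fun hy => h.ne (hx.trans hy.symm)⟩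
  · exact ⟨x, h.left_mem, hx⟩

theorem symm [T2Space X] (h : IsArc A x y) : IsArc A y x := by
  obtain ⟨γ, hγ, rfl⟩ := isArc_iff_exists_path.1 h
  exact isArc_iff_exists_path.2
    ⟨γ.symm, hγ.comp unitInterval.symm_bijective.injective, γ.symm_range⟩

theorem exists_isArc_of_mem_pair [T2Space X] (h : IsArc A x y) (hp : p ∈ ({x, y} : Set X)) :
    ∃ w, IsArc A p w ∧ ({x, y} : Set X) = {p, w} := by
  rcases hp with rfl | rfl
  · exact ⟨y, h, rfl⟩
  · exact ⟨x, h.symm, pair_comm _ _⟩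

theorem of_mem_pair [T2Space X] {a b : X} (h : IsArc A x y) (ha : a ∈ ({x, y} : Set X))
    (hb : b ∈ ({x, y} : Set X)) (hab : a ≠ b) : IsArc A a b := by
  obtain ⟨w, hw, hpair⟩ := h.exists_isArc_of_mem_pair ha
  rw [hpair] at hb
  rcases hb with rfl | rfl
  · exact absurd rfl hab
  · exact hw

end IsArc

theorem Path.injOn_trans {γ : Path x y} {δ : Path y z} (hγ : Function.Injective γ)
    (hδ : Function.Injective δ) (h : range γ ∩ range δ ⊆ {y, z}) :
    InjOn (γ.trans δ) {t | (t : ℝ) < 1} := by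
  have hcross : ∀ s t : unitInterval, (s : ℝ) ≤ 1 / 2 → ¬ (t : ℝ) ≤ 1 / 2 → (t : ℝ) < 1 →
      (γ.trans δ) s ≠ (γ.trans δ) t := by
    intro s t hs ht ht1 hst
    rw [Path.trans_apply, Path.trans_apply, dif_pos hs, dif_neg ht] at hst
    rcases h ⟨⟨_, hst⟩, ⟨_, rfl⟩⟩ with hy | hz
    · have := congrArg Subtype.val (hδ (hy.trans δ.source.symm))
      norm_num at this
      linarith
    · have := congrArg Subtype.val (hδ ((mem_singleton_iff.1 hz).trans δ.target.symm))
      norm_num at this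
      linarith
  intro s hs t ht hst
  by_cases hs2 : (s : ℝ) ≤ 1 / 2 <;> by_cases ht2 : (t : ℝ) ≤ 1 / 2
  · rw [Path.trans_apply, Path.trans_apply, dif_pos hs2, dif_pos ht2] at hst
    have := congrArg Subtype.val (hγ hst)
    exact Subtype.ext (by simp only at this; linarith)
  · exact absurd hst (hcross s t hs2 ht2 ht)
  · exact absurd hst.symm (hcross t s ht2 hs2 hs)
  · rw [Path.trans_apply, Path.trans_apply, dif_neg hs2, dif_neg ht2] at hst
    have := congrArg Subtype.val (hδ hst)
    exact Subtype.ext (by simp only at this; linarith)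

theorem IsArc.union [T2Space X] (hA : IsArc A x y) (hB : IsArc B y z) (hAB : A ∩ B ⊆ {y}) :
    IsArc (A ∪ B) x z := by
  obtain ⟨γ, hγ, rfl⟩ := isArc_iff_exists_path.1 hA
  obtain ⟨δ, hδ, rfl⟩ := isArc_iff_exists_path.1 hB
  have hinj := Path.injOn_trans hγ hδ (hAB.trans (singleton_subset_iff.2 (mem_insert _ _)))
  have hz : ∀ t, (γ.trans δ) t = z → t = 1 := by
    intro t ht
    rw [Path.trans_apply] at ht
    split_ifs at ht with h2
    · have hzy : z = y := hAB ⟨ht ▸ mem_range_self _, ⟨1, δ.target⟩⟩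
      have := congrArg Subtype.val (hδ (δ.target.trans (hzy.trans δ.source.symm)))
      norm_num at this
    · have := congrArg Subtype.val (hδ (ht.trans δ.target.symm))
      norm_num at this
      exact Subtype.ext (by simp only [Set.Icc.coe_one]; linarith)
  have h1 : ∀ s : unitInterval, ¬ (s : ℝ) < 1 → s = 1 := fun s hs =>
    Subtype.ext (le_antisymm s.2.2 (not_lt.1 hs))
  refine isArc_iff_exists_path.2 ⟨γ.trans δ, fun s t hst => ?_, Path.trans_range γ δ⟩
  by_cases hs : (s : ℝ) < 1
  · by_cases ht : (t : ℝ) < 1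
    · exact hinj hs ht hst
    · rw [h1 t ht, Path.target] at hst
      exact (hz s hst).trans (h1 t ht).symm
  · rw [h1 s hs, Path.target] at hst
    exact (h1 s hs).trans (hz t hst.symm).symm

theorem exists_embedding_addCircle_of_isArc [T2Space X] (hA : IsArc A x y) (hB : IsArc B x y)
    (hAB : A ∩ B ⊆ {x, y}) : ∃ f : AddCircle (1 : ℝ) → X, IsEmbedding f := by
  obtain ⟨γ, hγ, rfl⟩ := isArc_iff_exists_path.1 hA
  obtain ⟨δ, hδ, rfl⟩ := isArc_iff_exists_path.1 hB
  set loop := γ.trans δ.symm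
  have hinj : InjOn loop {t | (t : ℝ) < 1} :=
    Path.injOn_trans hγ (hδ.comp unitInterval.symm_bijective.injective)
      (by rw [δ.symm_range, pair_comm]; exact hAB)
  set e := AddCircle.equivIco (1 : ℝ) 0
  have he : ∀ w, (e w : ℝ) ∈ Icc (0 : ℝ) 1 ∧ (e w : ℝ) < 1 := fun w => by
    have h1 : (e w : ℝ) < 1 := by simpa using (e w).2.2
    exact ⟨⟨(e w).2.1, h1.le⟩, h1⟩
  have hcont : Continuous (AddCircle.liftIco 1 0 loop.extend) :=
    AddCircle.liftIco_zero_continuous (by simp) loop.continuous_extend.continuousOn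
  refine ⟨_, (hcont.isClosedEmbedding fun w w' hww' => ?_).isEmbedding⟩
  have hlift : ∀ w, AddCircle.liftIco 1 0 loop.extend w = loop ⟨e w, (he w).1⟩ :=
    fun w => loop.extend_apply (he w).1
  rw [hlift, hlift] at hww'
  exact e.injective (Subtype.ext (Subtype.mk.inj (hinj (he w).2 (he w').2 hww')))

theorem IsArc.exists_isCompact_isPreconnected [T2Space X] (h : IsArc A x y) :
    ∃ K ⊆ A, IsCompact K ∧ IsPreconnected K ∧ IsPreconnected (A \ K) ∧ x ∉ K ∧ y ∈ K := by
  obtain ⟨f, hf, rfl, rfl, rfl⟩ := h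
  set K := f '' {t | 1 / 2 ≤ (t : ℝ)}
  have hK : range f \ K = f '' {t | (t : ℝ) < 1 / 2} := by
    rw [← image_univ, ← image_sdiff hf.injective]
    congr 1
    ext t
    simp
  set half : Icc (0 : ℝ) 1 := ⟨1 / 2, by norm_num, by norm_num⟩
  refine ⟨K, image_subset_range _ _,
    (isClosed_le continuous_const continuous_subtype_val).isCompact.image hf.continuous,
    (isPreconnected_Ici (a := half)).image _ hf.continuous.continuousOn, ?_, ?_,
    ⟨1, by norm_num, rfl⟩⟩
  · rw [hK]
    exact (isPreconnected_Iio (a := half)).image _ hf.continuous.continuousOn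
  · rintro ⟨t, ht, h0⟩
    have ht0 : (t : ℝ) = 0 := Subtype.ext_iff.1 (hf.injective h0)
    exact absurd ht (by norm_num [ht0])

theorem isArc_biUnion_le [T2Space X] {P : ℕ → Set X} {y : ℕ → X} {n : ℕ}
    (h0 : IsArc (P 0) x (y 0)) (hsucc : ∀ t < n, IsArc (P (t + 1)) (y t) (y (t + 1)))
    (hmeet : ∀ t < n, (⋃ r ≤ t, P r) ∩ P (t + 1) ⊆ {y t}) :
    ∀ t ≤ n, IsArc (⋃ r ≤ t, P r) x (y t)
  | 0, _ => by simpa using h0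
  | t + 1, ht => by
    rw [Set.biUnion_le_succ]
    exact (isArc_biUnion_le h0 hsucc hmeet t (by omega)).union (hsucc t ht) (hmeet t ht)

theorem IsArc.nonempty_homeomorph_of_univ
    (h : IsArc (univ : Set X) x y) : Nonempty (X ≃ₜ Icc (0 : ℝ) 1) := by
  obtain ⟨f, hf, hrange, -, -⟩ := h
  exact ⟨(hf.toHomeomorphOfSurjective (range_eq_univ.1 hrange)).symm⟩

end Arcs

structure IsArcCover [TopologicalSpace X] {ι : Type*} (A : ι → Set X) (e₀ e₁ : ι → X) : Prop where
  isArc : ∀ i, IsArc (A i) (e₀ i) (e₁ i)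
  iUnion_eq : ⋃ i, A i = univ
  inter_subset : ∀ i j, i ≠ j → A i ∩ A j ⊆ ({e₀ i, e₁ i} : Set X) ∩ {e₀ j, e₁ j}

namespace IsArcCover

variable [TopologicalSpace X] {ι : Type*} {A : ι → Set X} {e₀ e₁ : ι → X} {i j : ι}

theorem exists_mem (hA : IsArcCover A e₀ e₁) (x : X) : ∃ i, x ∈ A i :=
  mem_iUnion.1 (hA.iUnion_eq ▸ mem_univ x)

theorem compactSpace [Finite ι] (hA : IsArcCover A e₀ e₁) : CompactSpace X :=
  ⟨hA.iUnion_eq ▸ isCompact_iUnion fun i => (hA.isArc i).isCompact⟩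

theorem inter_subsingleton [T2Space X] (hA : IsArcCover A e₀ e₁) (hT : NoSimpleClosedCurve X)
    (hij : i ≠ j) : (A i ∩ A j).Subsingleton := by
  intro w hw w' hw'
  by_contra hne
  have hwi := hA.inter_subset i j hij hw
  have hwi' := hA.inter_subset i j hij hw'
  exact hT (exists_embedding_addCircle_of_isArc
    ((hA.isArc i).of_mem_pair hwi.1 hwi'.1 hne) ((hA.isArc j).of_mem_pair hwi.2 hwi'.2 hne)
    fun v hv => pair_subset_pair_of_ne hwi.1 hwi'.1 hne (hA.inter_subset i j hij hv).1)

end IsArcCover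

section Chains

variable {ι : Type*} (A : ι → Set X) (p : X)

def MeetAwayFrom (i j : ι) : Prop := ((A i ∩ A j) \ {p}).Nonempty

def IsReturnChain (m : ℕ) (k : ℕ → ι) : Prop :=
  p ∈ A (k 0) ∧ p ∈ A (k m) ∧ k 0 ≠ k m ∧ ∀ t < m, MeetAwayFrom A p (k t) (k (t + 1))

variable {A p}

theorem MeetAwayFrom.symm {i j : ι} (h : MeetAwayFrom A p i j) : MeetAwayFrom A p j i := by
  obtain ⟨x, ⟨hi, hj⟩, hx⟩ := h
  exact ⟨x, ⟨hj, hi⟩, hx⟩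

namespace IsReturnChain

variable {m : ℕ} {k : ℕ → ι}

theorem truncate (h : IsReturnChain A p m k) {c : ℕ} (hcm : c ≤ m) (hc : p ∈ A (k c))
    (h0c : k 0 ≠ k c) : IsReturnChain A p c k :=
  ⟨h.1, hc, h0c, fun t ht => h.2.2.2 t (by omega)⟩

theorem splice (h : IsReturnChain A p m k) {a b : ℕ} (hab : a + 1 < b) (hbm : b ≤ m)
    (hz : MeetAwayFrom A p (k a) (k b)) :
    IsReturnChain A p (m - (b - a - 1))
      (fun t => if t ≤ a then k t else k (t + (b - a - 1))) := by
  obtain ⟨h0, hm, hne, hstep⟩ := h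
  have hend : ¬ m - (b - a - 1) ≤ a := by omega
  have hlast : m - (b - a - 1) + (b - a - 1) = m := by omega
  refine ⟨by simpa using h0, by simpa [hend, hlast] using hm, by simpa [hend, hlast] using hne,
    fun t ht => ?_⟩
  rcases lt_trichotomy t a with hta | rfl | hta
  · simpa [hta.le, show t + 1 ≤ a by omega] using hstep t (by omega)
  · simpa [show t + 1 + (b - t - 1) = b by omega] using hz
  · simpa [show ¬ t ≤ a by omega, show ¬ t + 1 ≤ a by omega,
      show t + 1 + (b - a - 1) = t + (b - a - 1) + 1 by omega]
      using hstep (t + (b - a - 1)) (by omega)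

theorem ne_succ (h : IsReturnChain A p m k)
    (hshort : ∀ a b, a + 1 < b → b ≤ m → ¬ MeetAwayFrom A p (k a) (k b)) {t : ℕ} (ht : t < m) :
    k t ≠ k (t + 1) := by
  obtain ⟨-, -, hne, hstep⟩ := h
  intro he
  rcases Nat.lt_or_ge (t + 1) m with h1 | h1
  · exact hshort t (t + 2) (by omega) (by omega) (he ▸ hstep (t + 1) h1)
  · obtain ⟨s, rfl⟩ : ∃ s, t = s + 1 := Nat.exists_eq_succ_of_ne_zero
      (by rintro rfl; exact hne (by rw [he]; congr; omega))
    exact hshort s (s + 2) (by omega) (by omega) (he ▸ hstep s (by omega))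

end IsReturnChain

namespace IsArcCover

variable [TopologicalSpace X] [T2Space X] {e₀ e₁ : ι → X} {m : ℕ} {k : ℕ → ι}

theorem exists_shortcut_of_isReturnChain (hA : IsArcCover A e₀ e₁) (hT : NoSimpleClosedCurve X)
    (hk : IsReturnChain A p m k) :
    (∃ a b, a + 1 < b ∧ b ≤ m ∧ MeetAwayFrom A p (k a) (k b)) ∨
      ∃ c, 0 < c ∧ c < m ∧ p ∈ A (k c) := by
  by_contra! h
  obtain ⟨hshort, hmid⟩ := h
  have hcons : ∀ t < m, k t ≠ k (t + 1) := fun t ht => hk.ne_succ hshort ht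
  obtain ⟨h0, hm, hne, hstep⟩ := hk
  have hm0 : 0 < m := Nat.pos_of_ne_zero (by rintro rfl; exact hne rfl)
  have : Nonempty X := ⟨p⟩
  choose! y hy using hstep
  have hends : ∀ t < m,
      y t ∈ ({e₀ (k t), e₁ (k t)} : Set X) ∩ {e₀ (k (t + 1)), e₁ (k (t + 1))} :=
    fun t ht => hA.inter_subset _ _ (hcons t ht) (hy t ht).1
  have hsing : ∀ t < m, A (k t) ∩ A (k (t + 1)) ⊆ {y t} :=
    fun t ht w hw => hA.inter_subsingleton hT (hcons t ht) hw (hy t ht).1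
  have hyp : ∀ t < m, p ≠ y t := fun t ht hpy => (hy t ht).2 hpy.symm
  have hp : p ∈ ({e₀ (k 0), e₁ (k 0)} : Set X) ∩ {e₀ (k m), e₁ (k m)} :=
    hA.inter_subset _ _ hne ⟨h0, hm⟩
  have hfar : ∀ r t w, r + 1 < t → t ≤ m → w ∈ A (k r) → w ∈ A (k t) → w = p :=
    fun r t w hrt htm hr ht => by_contra fun hwp => hshort r t hrt htm ⟨w, ⟨hr, ht⟩, hwp⟩
  have hU : IsArc (⋃ r ≤ m - 1, A (k r)) p (y (m - 1)) := by
    refine isArc_biUnion_le ((hA.isArc (k 0)).of_mem_pair hp.1 (hends 0 hm0).1 (hyp 0 hm0))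
      (fun t ht => (hA.isArc _).of_mem_pair (hends t (by omega)).2 (hends (t + 1) (by omega)).1
        fun he => hyp t (by omega) (hfar t (t + 2) (y t) (by omega) (by omega)
          (hy t (by omega)).1.1 (he ▸ (hy (t + 1) (by omega)).1.2)).symm)
      (fun t ht w ⟨hw, hw'⟩ => ?_) (m - 1) le_rfl
    obtain ⟨r, hr, hwr⟩ := mem_iUnion₂.1 hw
    rcases hr.lt_or_eq with hr | rfl
    · exact absurd (hfar r (t + 1) w (by omega) (by omega) hwr hw' ▸ hw')
        (hmid (t + 1) (by omega) (by omega))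
    · exact hsing r (by omega) ⟨hwr, hw'⟩
  have hm1 : m - 1 + 1 = m := by omega
  have hym : y (m - 1) ∈ ({e₀ (k m), e₁ (k m)} : Set X) := hm1 ▸ (hends (m - 1) (by omega)).2
  refine hT (exists_embedding_addCircle_of_isArc hU
    ((hA.isArc (k m)).of_mem_pair hp.2 hym (hyp (m - 1) (by omega))) ?_)
  rintro w ⟨hw, hwm⟩
  obtain ⟨r, hr, hwr⟩ := mem_iUnion₂.1 hw
  rcases hr.lt_or_eq with hr | rfl
  · exact Or.inl (hfar r m w (by omega) le_rfl hwr hwm)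
  · exact Or.inr (hsing _ (by omega) ⟨hwr, hm1 ▸ hwm⟩)

theorem not_isReturnChain (hA : IsArcCover A e₀ e₁) (hT : NoSimpleClosedCurve X) :
    ¬ IsReturnChain A p m k := by
  induction m using Nat.strong_induction_on generalizing k with
  | _ m IH =>
  intro hk
  rcases hA.exists_shortcut_of_isReturnChain hT hk with ⟨a, b, hab, hbm, hz⟩ | ⟨c, hc0, hcm, hc⟩
  · exact IH _ (by omega) (hk.splice hab hbm hz)
  · by_cases h0c : k 0 = k c
    · exact IH _ (by omega) (hk.splice (a := 0) (by omega) (Nat.succ_le_of_lt hcm)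
        (h0c ▸ hk.2.2.2 c hcm))
    · exact IH c hcm (hk.truncate hcm.le hc h0c)

theorem not_reflTransGen (hA : IsArcCover A e₀ e₁) (hT : NoSimpleClosedCurve X) {i j : ι}
    (hij : i ≠ j) (hi : p ∈ A i) (hj : p ∈ A j) :
    ¬ Relation.ReflTransGen (MeetAwayFrom A p) i j := by
  intro h
  obtain ⟨m, k, rfl, rfl, hk⟩ := h.exists_seq
  exact hA.not_isReturnChain hT ⟨hi, hj, hij, hk⟩

end IsArcCover

end Chains

section Branches

variable {ι : Type*} {A : ι → Set X} {p : X}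

instance : Std.Symm (MeetAwayFrom A p) := ⟨fun _ _ => MeetAwayFrom.symm⟩

variable (A p) in
def awayComponent (l : ι) : Set ι := {j | Relation.ReflTransGen (MeetAwayFrom A p) l j}

variable (A p) in
def branchRegion (l : ι) : Set X := (⋃ j ∈ awayComponent A p l, A j) \ {p}

theorem mem_awayComponent_self (l : ι) : l ∈ awayComponent A p l := Relation.ReflTransGen.refl

theorem mem_awayComponent_comm {i j : ι} : i ∈ awayComponent A p j ↔ j ∈ awayComponent A p i :=
  ⟨Std.Symm.symm _ _, Std.Symm.symm _ _⟩

theorem inter_subset_of_mem_awayComponent {l i j : ι} (hi : i ∈ awayComponent A p l)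
    (hj : j ∉ awayComponent A p l) : A i ∩ A j ⊆ {p} :=
  fun x hx => by_contra fun hxp => hj (Relation.ReflTransGen.tail hi ⟨x, hx, hxp⟩)

namespace IsArcCover

variable [TopologicalSpace X] {e₀ e₁ : ι → X}

theorem exists_mem_awayComponent [T2Space X] [ConnectedSpace X] [Finite ι] (hA : IsArcCover A e₀ e₁)
    (i : ι) : ∃ l ∈ awayComponent A p i, p ∈ A l := by
  by_contra! h
  obtain ⟨l, hl⟩ := hA.exists_mem p
  obtain ⟨i', hi', j, hj, x, hx⟩ := exists_inter_nonempty_of_iUnion_eq_univ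
    (fun l => (hA.isArc l).isClosed) hA.iUnion_eq (S := awayComponent A p i)
    ⟨i, mem_awayComponent_self i, (hA.isArc i).nonempty⟩ ⟨l, fun hl' => h l hl' hl, p, hl⟩
  exact h i' hi' (inter_subset_of_mem_awayComponent hi' hj hx ▸ hx.1)

theorem branchRegion_eq_compl (hA : IsArcCover A e₀ e₁) (l : ι) :
    branchRegion A p l = ({p} ∪ ⋃ j ∈ (awayComponent A p l)ᶜ, A j)ᶜ := by
  ext x
  simp only [branchRegion, mem_sdiff, mem_iUnion₂, mem_compl_iff, mem_union, not_or, not_exists]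
  constructor
  · rintro ⟨⟨i, hi, hxi⟩, hxp⟩
    exact ⟨hxp, fun j hj hxj => hxp (inter_subset_of_mem_awayComponent hi hj ⟨hxi, hxj⟩)⟩
  · rintro ⟨hxp, hx⟩
    obtain ⟨i, hxi⟩ := hA.exists_mem x
    exact ⟨⟨i, by_contra fun hi => hx i hi hxi, hxi⟩, hxp⟩

theorem isOpen_branchRegion [T2Space X] [Finite ι] (hA : IsArcCover A e₀ e₁) (l : ι) :
    IsOpen (branchRegion A p l) := by
  rw [hA.branchRegion_eq_compl]
  exact (isClosed_singleton.union
    ((toFinite _).isClosed_biUnion fun j _ => (hA.isArc j).isClosed)).isOpen_compl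

theorem pairwise_disjoint_branchRegion [T2Space X] (hA : IsArcCover A e₀ e₁)
    (hT : NoSimpleClosedCurve X) :
    Pairwise (Function.onFun Disjoint fun l : {l // p ∈ A l} => branchRegion A p l) := by
  rintro ⟨l, hl⟩ ⟨l', hl'⟩ hne
  refine Set.disjoint_left.2 fun x ⟨hx, hxp⟩ ⟨hx', _⟩ => ?_
  obtain ⟨i, hi, hxi⟩ := mem_iUnion₂.1 hx
  obtain ⟨j, hj, hxj⟩ := mem_iUnion₂.1 hx'
  exact hA.not_reflTransGen hT (fun h => hne (Subtype.ext h)) hl hl'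
    ((hi.tail ⟨x, ⟨hxi, hxj⟩, hxp⟩).trans (mem_awayComponent_comm.1 hj))

theorem iUnion_branchRegion [T2Space X] [ConnectedSpace X] [Finite ι] (hA : IsArcCover A e₀ e₁) :
    ⋃ l : {l // p ∈ A l}, branchRegion A p l = {p}ᶜ := by
  refine subset_antisymm (iUnion_subset fun l => sdiff_subset_compl _ _) fun x hxp => ?_
  obtain ⟨i, hxi⟩ := hA.exists_mem x
  obtain ⟨l, hli, hl⟩ := hA.exists_mem_awayComponent (p := p) i
  exact mem_iUnion.2 ⟨⟨l, hl⟩, mem_biUnion (mem_awayComponent_comm.1 hli) hxi, hxp⟩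

theorem branchRegion_nonempty (hA : IsArcCover A e₀ e₁) (l : ι) :
    (branchRegion A p l).Nonempty :=
  ((hA.isArc l).diff_singleton_nonempty p).mono
    (sdiff_subset_sdiff_left (subset_biUnion_of_mem (mem_awayComponent_self l)))

end IsArcCover

end Branches

section SeparatingContinuum

variable [TopologicalSpace X] {ι : Type*} [DecidableEq ι] {A : ι → Set X} {e₀ e₁ : ι → X}
  {p : X} {a : ι} {K : Set X}

namespace IsArcCover

theorem isPreconnected_biUnion_update (hA : IsArcCover A e₀ e₁) (hK : K.Nonempty)
    (hKpre : IsPreconnected K) (hmeet : ∀ j ≠ a, (A a ∩ A j) \ {p} ⊆ K) :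
    IsPreconnected (⋃ j ∈ awayComponent A p a, Function.update A a K j) := by
  refine IsPreconnected.biUnion_of_reflTransGen_of_base (a := a) (fun j _ => ?_) fun i hi => ?_
  · rcases eq_or_ne j a with rfl | hja
    · simpa using hKpre
    · simpa [hja] using (hA.isArc j).isPreconnected
  refine hi.mono_reachable fun u v hau huv => ⟨?_, hau, hau.tail huv⟩
  obtain ⟨x, ⟨hxu, hxv⟩, hxp⟩ := huv
  rcases eq_or_ne u a with rfl | hua <;> rcases eq_or_ne v u with rfl | hvu
  · simpa using hK
  · exact ⟨x, by simpa [hvu] using ⟨hmeet v hvu ⟨⟨hxu, hxv⟩, hxp⟩, hxv⟩⟩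
  · exact ⟨x, by simpa [hua] using hxu⟩
  · rcases eq_or_ne v a with rfl | hva
    · exact ⟨x, by simpa [hua] using ⟨hxu, hmeet u hua ⟨⟨hxv, hxu⟩, hxp⟩⟩⟩
    · exact ⟨x, by simpa [hua, hva] using ⟨hxu, hxv⟩⟩

theorem isPreconnected_biUnion_update_compl [T2Space X] [ConnectedSpace X] [Finite ι]
    (hA : IsArcCover A e₀ e₁) {N : Set X} (hNpre : IsPreconnected N) (hpN : p ∈ N) :
    IsPreconnected (⋃ j ∈ insert a (awayComponent A p a)ᶜ, Function.update A a N j) := by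
  refine IsPreconnected.biUnion_of_reflTransGen_of_base (a := a) (fun j _ => ?_) fun i hi => ?_
  · rcases eq_or_ne j a with rfl | hja
    · simpa using hNpre
    · simpa [hja] using (hA.isArc j).isPreconnected
  rcases hi with rfl | hiC
  · exact .refl
  -- go from `a` to `i` through a piece `l` that meets `A a` at `p` and lies in the component of `i`
  obtain ⟨l, hli, hl⟩ := hA.exists_mem_awayComponent (p := p) i
  have hout : ∀ u ∈ awayComponent A p l, u ∉ awayComponent A p a := fun u hu hau =>
    hiC (hau.trans ((mem_awayComponent_comm.1 hu).trans (mem_awayComponent_comm.1 hli)))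
  have hne : ∀ u ∈ awayComponent A p l, u ≠ a := by
    rintro u hu rfl
    exact hout u hu (mem_awayComponent_self u)
  refine .head ⟨⟨p, by simpa [hne l (mem_awayComponent_self l)] using ⟨hpN, hl⟩⟩,
    mem_insert a _, Or.inr (hout l (mem_awayComponent_self l))⟩ ?_
  refine (mem_awayComponent_comm.1 hli).mono_reachable fun u v hlu huv => ?_
  have hlv : v ∈ awayComponent A p l := Relation.ReflTransGen.tail hlu huv
  obtain ⟨x, hx, -⟩ := huv
  exact ⟨⟨x, by simpa [hne u hlu, hne v hlv] using hx⟩, Or.inr (hout u hlu), Or.inr (hout v hlv)⟩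

theorem compl_biUnion_update (hA : IsArcCover A e₀ e₁) (hKA : K ⊆ A a) (hpK : p ∉ K)
    (hmeet : ∀ j ≠ a, (A a ∩ A j) \ {p} ⊆ K)
    (hpC : ∀ j ∈ awayComponent A p a, j ≠ a → p ∉ A j) :
    (⋃ j ∈ awayComponent A p a, Function.update A a K j)ᶜ =
      ⋃ j ∈ insert a (awayComponent A p a)ᶜ, Function.update A a (A a \ K) j := by
  refine subset_antisymm (fun x hx => ?_) ?_
  · obtain ⟨j, hxj⟩ := hA.exists_mem x
    by_cases hjC : j ∈ awayComponent A p a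
    · rcases eq_or_ne j a with rfl | hja
      · refine mem_biUnion (mem_insert j _) ?_
        simpa using ⟨hxj, fun hxK => hx (mem_biUnion hjC (by simpa using hxK))⟩
      · exact absurd (mem_biUnion hjC (by simpa [hja] using hxj)) hx
    · have hja : j ≠ a := by
        rintro rfl
        exact hjC (mem_awayComponent_self j)
      exact mem_biUnion (Or.inr hjC) (by simpa [hja] using hxj)
  · intro x hx hxB
    obtain ⟨i, hi, hxi⟩ := mem_iUnion₂.1 hx
    obtain ⟨j, hj, hxj⟩ := mem_iUnion₂.1 hxB
    rcases eq_or_ne i a with rfl | hia <;> rcases eq_or_ne j i with rfl | hji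
    · simp only [Function.update_self] at hxi hxj
      exact hxi.2 hxj
    · simp only [Function.update_self, Function.update_of_ne hji] at hxi hxj
      by_cases hxp : x = p
      · exact hpC j hj hji (hxp ▸ hxj)
      · exact hxi.2 (hmeet j hji ⟨⟨hxi.1, hxj⟩, hxp⟩)
    · exact absurd hj (hi.resolve_left hia)
    · have hiC : i ∉ awayComponent A p a := hi.resolve_left hia
      rcases eq_or_ne j a with rfl | hja
      · simp only [Function.update_self, Function.update_of_ne hia] at hxi hxj
        exact hpK (eq_of_mem_singleton
          (inter_subset_of_mem_awayComponent hj hiC ⟨hKA hxj, hxi⟩) ▸ hxj)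
      · simp only [Function.update_of_ne hia, Function.update_of_ne hja] at hxi hxj
        exact hpC j hj hja (eq_of_mem_singleton
          (inter_subset_of_mem_awayComponent hj hiC ⟨hxj, hxi⟩) ▸ hxj)

end IsArcCover

end SeparatingContinuum

theorem IsArcCover.exists_mem_NCstar_notMem [MetricSpace X] [ConnectedSpace X] {ι : Type*}
    [Finite ι] {A : ι → Set X} {e₀ e₁ : ι → X} {p : X} {a b : ι} (hA : IsArcCover A e₀ e₁)
    (hT : NoSimpleClosedCurve X) (hab : a ≠ b) (ha : p ∈ A a) (hb : p ∈ A b) :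
    ∃ B ∈ NCstar X, p ∉ (B : Set X) := by
  classical
  obtain ⟨w, hw, hpair⟩ :=
    (hA.isArc a).exists_isArc_of_mem_pair (hA.inter_subset a b hab ⟨ha, hb⟩).1
  obtain ⟨K, hKA, hKc, hKpre, hNpre, hpK, hwK⟩ := hw.exists_isCompact_isPreconnected
  have hmeet : ∀ j ≠ a, (A a ∩ A j) \ {p} ⊆ K := by
    rintro j hja x ⟨hx, hxp⟩
    have hx' := (hA.inter_subset a j hja.symm hx).1
    rw [hpair] at hx'
    exact (hx'.resolve_left hxp) ▸ hwK
  have hpC : ∀ j ∈ awayComponent A p a, j ≠ a → p ∉ A j := fun j hj hja hpj =>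
    hA.not_reflTransGen hT hja.symm ha hpj hj
  have haC := mem_awayComponent_self (A := A) (p := p) a
  set B := ⋃ j ∈ awayComponent A p a, Function.update A a K j
  have hBc : IsCompact B := (toFinite _).isCompact_biUnion fun j _ => by
    rcases eq_or_ne j a with rfl | hja
    · simpa using hKc
    · simpa [hja] using (hA.isArc j).isCompact
  have hwB : w ∈ B := mem_biUnion haC (by simpa using hwK)
  have hpB : p ∉ B := by
    intro hpB
    obtain ⟨j, hj, hpj⟩ := mem_iUnion₂.1 hpB
    rcases eq_or_ne j a with rfl | hja
    · exact hpK (by simpa using hpj)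
    · exact hpC j hj hja (by simpa [hja] using hpj)
  refine ⟨⟨⟨B, hBc⟩, ⟨w, hwB⟩⟩,
    ⟨⟨⟨w, hwB⟩, hA.isPreconnected_biUnion_update ⟨w, hwK⟩ hKpre hmeet⟩, ?_⟩, hpB⟩
  change IsPreconnected Bᶜ
  rw [hA.compl_biUnion_update hKA hpK hmeet hpC]
  exact hA.isPreconnected_biUnion_update_compl hNpre ⟨hw.left_mem, hpK⟩

section Unbranched

variable {ι : Type*} {A : ι → Set X}

def NoTriplePoint (A : ι → Set X) : Prop :=
  ∀ x i j k, x ∈ A i → x ∈ A j → x ∈ A k → i = j ∨ i = k ∨ j = k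

theorem NoTriplePoint.subtype_ne [DecidableEq ι] {i j : ι} (h3 : NoTriplePoint A) :
    NoTriplePoint fun k : {k // k ≠ j} => if k.1 = i then A i ∪ A j else A k := by
  classical
  intro x k₁ k₂ k₃ h₁ h₂ h₃
  -- send each piece containing `x` to a piece of the original cover containing `x`
  let τ : {k // k ≠ j} → ι := fun k => if k.1 = i ∧ x ∉ A i then j else k.1
  have hτ : ∀ k : {k // k ≠ j}, x ∈ (if k.1 = i then A i ∪ A j else A k) → x ∈ A (τ k) := by
    intro k hk
    by_cases hki : k.1 = i
    · by_cases hxi : x ∈ A i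
      · simp [τ, hxi, hki]
      · simp only [hki, if_true] at hk
        simpa [τ, hxi, hki] using hk.resolve_left hxi
    · simpa [τ, hki] using hk
  have hτinj : ∀ k k' : {k // k ≠ j}, τ k = τ k' → k = k' := by
    intro k k' hkk'
    have hkj := k.2
    have hk'j := k'.2
    simp only [τ] at hkk'
    split_ifs at hkk' <;> first | exact Subtype.ext hkk' | exact Subtype.ext (by simp_all)
  rcases h3 x _ _ _ (hτ k₁ h₁) (hτ k₂ h₂) (hτ k₃ h₃) with h | h | h
  · exact Or.inl (hτinj _ _ h)
  · exact Or.inr (Or.inl (hτinj _ _ h))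
  · exact Or.inr (Or.inr (hτinj _ _ h))

variable [TopologicalSpace X] [T2Space X] {e₀ e₁ : ι → X}

theorem IsArcCover.merge (hA : IsArcCover A e₀ e₁) (hT : NoSimpleClosedCurve X)
    (h3 : NoTriplePoint A) {i j : ι} (hij : i ≠ j) (hy : (A i ∩ A j).Nonempty) :
    ∃ (A' : {k // k ≠ j} → Set X) (e₀' e₁' : {k // k ≠ j} → X),
      IsArcCover A' e₀' e₁' ∧ NoTriplePoint A' := by
  classical
  obtain ⟨y, hyi, hyj⟩ := hy
  have hsing : A i ∩ A j ⊆ {y} := fun w hw => hA.inter_subsingleton hT hij hw ⟨hyi, hyj⟩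
  have hyends := hA.inter_subset i j hij ⟨hyi, hyj⟩
  obtain ⟨xi, hxi, hpairi⟩ := (hA.isArc i).exists_isArc_of_mem_pair hyends.1
  obtain ⟨xj, hxj, hpairj⟩ := (hA.isArc j).exists_isArc_of_mem_pair hyends.2
  have hkey : ∀ l, l ≠ i → l ≠ j →
      (A i ∪ A j) ∩ A l ⊆ ({xi, xj} : Set X) ∩ {e₀ l, e₁ l} := by
    have hy3 : ∀ l, l ≠ i → l ≠ j → y ∉ A l := fun l hli hlj hyl => by
      rcases h3 y i j l hyi hyj hyl with h | h | h
      exacts [hij h, hli h.symm, hlj h.symm]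
    rintro l hli hlj w ⟨hw | hw, hwl⟩
    · have hw' := hA.inter_subset i l hli.symm ⟨hw, hwl⟩
      rw [hpairi] at hw'
      rcases hw'.1 with rfl | rfl
      · exact absurd hwl (hy3 l hli hlj)
      · exact ⟨Or.inl rfl, hw'.2⟩
    · have hw' := hA.inter_subset j l hlj.symm ⟨hw, hwl⟩
      rw [hpairj] at hw'
      rcases hw'.1 with rfl | rfl
      · exact absurd hwl (hy3 l hli hlj)
      · exact ⟨Or.inr rfl, hw'.2⟩
  refine ⟨fun k => if k.1 = i then A i ∪ A j else A k, fun k => if k.1 = i then xi else e₀ k,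
    fun k => if k.1 = i then xj else e₁ k, ⟨fun k => ?_, ?_, fun k k' hkk' => ?_⟩,
    h3.subtype_ne⟩
  · by_cases hk : k.1 = i
    · simpa [hk] using hxi.symm.union hxj hsing
    · simpa [hk] using hA.isArc k
  · refine eq_univ_of_forall fun x => ?_
    obtain ⟨l, hl⟩ := hA.exists_mem x
    by_cases hlj : l = j
    · exact mem_iUnion.2 ⟨⟨i, hij⟩, by simpa [hlj] using Or.inr (hlj ▸ hl)⟩
    · by_cases hli : l = i
      · exact mem_iUnion.2 ⟨⟨l, hlj⟩, by simpa [hli] using Or.inl (hli ▸ hl)⟩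
      · exact mem_iUnion.2 ⟨⟨l, hlj⟩, by simpa [hli] using hl⟩
  · have hne : k.1 ≠ k'.1 := fun h => hkk' (Subtype.ext h)
    by_cases hk : k.1 = i <;> by_cases hk' : k'.1 = i
    · exact absurd (hk.trans hk'.symm) hne
    · simpa [hk, hk'] using hkey k' hk' k'.2
    · simpa [hk, hk', inter_comm, and_comm] using hkey k hk k.2
    · simpa [hk, hk'] using hA.inter_subset k k' hne

theorem IsArcCover.exists_isArc_univ [ConnectedSpace X] [Finite ι] (hA : IsArcCover A e₀ e₁)
    (hT : NoSimpleClosedCurve X) (h3 : NoTriplePoint A) : ∃ x y, IsArc (univ : Set X) x y := by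
  induction hn : Nat.card ι using Nat.strong_induction_on generalizing ι with
  | _ n IH =>
  obtain ⟨i, -⟩ := hA.exists_mem (Classical.arbitrary X)
  by_cases hsub : ∃ j, j ≠ i
  swap
  · have hi : A i = univ := eq_univ_of_forall fun x => by
      obtain ⟨l, hl⟩ := hA.exists_mem x
      by_contra hx
      exact hsub ⟨l, fun hli => hx (hli ▸ hl)⟩
    exact ⟨_, _, hi ▸ hA.isArc i⟩
  obtain ⟨j, hji⟩ := hsub
  obtain ⟨i', rfl, j', hj', hy⟩ := exists_inter_nonempty_of_iUnion_eq_univ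
    (fun l => (hA.isArc l).isClosed) hA.iUnion_eq (S := {i})
    ⟨i, rfl, (hA.isArc i).nonempty⟩ ⟨j, hji, (hA.isArc j).nonempty⟩
  obtain ⟨A', e₀', e₁', hA', h3'⟩ := hA.merge hT h3 (Ne.symm hj') hy
  exact IH _ (hn ▸ Finite.card_subtype_lt (p := (· ≠ j')) (x := j') (by simp)) hA' h3' rfl

end Unbranched

section Hyperspace

variable [MetricSpace X]

theorem isOpen_setOf_inter_nonempty {U : Set X} (hU : IsOpen U) :
    IsOpen {C : NonemptyCompacts X | ((C : Set X) ∩ U).Nonempty} :=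
  letI := UniformSpace.hausdorff X
  (UniformSpace.hausdorff.isOpen_inter_nonempty_of_isOpen hU).preimage
    NonemptyCompacts.uniformContinuous_coe.continuous

theorem isOpen_setOf_notMem (p : X) : IsOpen {C : NonemptyCompacts X | p ∉ (C : Set X)} := by
  have : {C : NonemptyCompacts X | p ∉ (C : Set X)} =
      {C : NonemptyCompacts X | 0 < infDist p (C : Set X)} := by
    ext C
    exact C.isCompact.isClosed.notMem_iff_infDist_pos C.nonempty
  rw [this]
  exact isOpen_lt continuous_const (lipschitz_infDist_set p).continuous

theorem not_isConnected_NCstar_of_branches {ι : Type*} {p : X} (D : ι → Set X)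
    (hDo : ∀ i, IsOpen (D i)) (hDd : Pairwise (Function.onFun Disjoint D)) (hDc : ⋃ i, D i = {p}ᶜ)
    (hDne : ∀ i, (D i).Nonempty) {a b c : ι} (hab : a ≠ b) (hac : a ≠ c) (hbc : b ≠ c)
    {A B : NonemptyCompacts X} (hA : A ∈ NCstar X) (hpA : p ∈ (A : Set X)) (hB : B ∈ NCstar X)
    (hpB : p ∉ (B : Set X)) : ¬ IsConnected (NCstar X) := by
  set U := {C : NonemptyCompacts X |
    ∃ i j, i ≠ j ∧ ((C : Set X) ∩ D i).Nonempty ∧ ((C : Set X) ∩ D j).Nonempty}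
  have hUo : IsOpen U := isOpen_iff_forall_mem_open.2 fun C ⟨i, j, hij, hi, hj⟩ =>
    ⟨_, fun C' hC' => ⟨i, j, hij, hC'.1, hC'.2⟩,
      (isOpen_setOf_inter_nonempty (hDo i)).inter (isOpen_setOf_inter_nonempty (hDo j)), hi, hj⟩
  have hsub : ∀ C : NonemptyCompacts X, p ∉ (C : Set X) → (C : Set X) ⊆ ⋃ i, D i :=
    fun C hpC x hx => hDc ▸ fun hxp => hpC (hxp ▸ hx)
  -- the complement of a member through `p` misses all but at most one branch
  have hcover : NCstar X ⊆ U ∪ {C | p ∉ (C : Set X)} := by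
    intro C hC
    by_cases hpC : p ∈ (C : Set X)
    · left
      have hcompl : ((C : Set X)ᶜ) ⊆ ⋃ i, D i := fun x hx => hDc ▸ fun hxp => hx (hxp ▸ hpC)
      have hmeet : ∀ i, ¬ (((C : Set X)ᶜ) ∩ D i).Nonempty → ((C : Set X) ∩ D i).Nonempty :=
        fun i hi => (hDne i).mono fun x hx => ⟨by_contra fun hxC => hi ⟨x, hxC, hx⟩, hx⟩
      have huniq := fun i j => hC.2.eq_of_inter_nonempty hDo hDd hcompl (i := i) (j := j)
      by_cases ha : (((C : Set X)ᶜ) ∩ D a).Nonempty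
      · exact ⟨b, c, hbc, hmeet b fun hb => hab (huniq a b ha hb),
          hmeet c fun hc => hac (huniq a c ha hc)⟩
      · by_cases hb : (((C : Set X)ᶜ) ∩ D b).Nonempty
        · exact ⟨a, c, hac, hmeet a ha, hmeet c fun hc => hbc (huniq b c hb hc)⟩
        · exact ⟨a, b, hab, hmeet a ha, hmeet b hb⟩
    · exact Or.inr hpC
  intro hconn
  obtain ⟨C, hC, ⟨i, j, hij, hi, hj⟩, hpC⟩ := hconn.isPreconnected U _ hUo (isOpen_setOf_notMem p)
    hcover ⟨A, hA, (hcover hA).resolve_right (not_not.2 hpA)⟩ ⟨B, hB, hpB⟩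
  exact hij (hC.1.isPreconnected.eq_of_inter_nonempty hDo hDd (hsub C hpC) hi hj)

theorem top_mem_NCstar [CompactSpace X] [ConnectedSpace X] : ⊤ ∈ NCstar X :=
  ⟨by simpa using isConnected_univ, by simpa using isPreconnected_empty⟩

theorem IsArcCover.not_isConnected_NCstar [ConnectedSpace X] {ι : Type*}
    [Finite ι] {A : ι → Set X} {e₀ e₁ : ι → X} (hA : IsArcCover A e₀ e₁)
    (hT : NoSimpleClosedCurve X) {p : X} {a b c : ι} (ha : p ∈ A a) (hb : p ∈ A b)
    (hc : p ∈ A c) (hab : a ≠ b) (hac : a ≠ c) (hbc : b ≠ c) : ¬ IsConnected (NCstar X) := by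
  have := hA.compactSpace
  obtain ⟨B, hB, hpB⟩ := hA.exists_mem_NCstar_notMem hT hab ha hb
  exact not_isConnected_NCstar_of_branches (fun l : {l // p ∈ A l} => branchRegion A p l)
    (fun l => hA.isOpen_branchRegion l) (hA.pairwise_disjoint_branchRegion hT)
    hA.iUnion_branchRegion (fun l => hA.branchRegion_nonempty l)
    (a := ⟨a, ha⟩) (b := ⟨b, hb⟩) (c := ⟨c, hc⟩)
    (by simpa using hab) (by simpa using hac) (by simpa using hbc) top_mem_NCstar
    (by simp) hB hpB

end Hyperspace

section Interval

variable [MetricSpace X]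

abbrev nonemptyCompactsIic (t : Icc (0 : ℝ) 1) : NonemptyCompacts (Icc (0 : ℝ) 1) :=
  ⟨⟨Iic t, isClosed_Iic.isCompact⟩, ⟨0, unitInterval.nonneg'⟩⟩

theorem continuous_nonemptyCompactsIic : Continuous nonemptyCompactsIic := by
  have key : ∀ s t : Icc (0 : ℝ) 1, ∀ x ∈ Iic s, ∃ y ∈ Iic t, dist x y ≤ dist s t := by
    intro s t x hx
    refine ⟨min x t, mem_Iic.2 (min_le_right _ _), ?_⟩
    rcases le_total x t with hxt | hxt
    · simp [min_eq_left hxt]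
    · have htx : (t : ℝ) ≤ x := hxt
      have hxs : (x : ℝ) ≤ s := hx
      rw [min_eq_right hxt, Subtype.dist_eq, Subtype.dist_eq, Real.dist_eq, Real.dist_eq,
        abs_of_nonneg (by linarith), abs_of_nonneg (by linarith)]
      linarith
  refine LipschitzWith.continuous (K := 1) (LipschitzWith.of_dist_le_mul fun s t => ?_)
  rw [NNReal.coe_one, one_mul, NonemptyCompacts.dist_eq]
  exact hausdorffDist_le_of_mem_dist dist_nonneg (key s t) fun x hx =>
    (key t s x hx).imp fun y hy => ⟨hy.1, hy.2.trans (dist_comm t s).le⟩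

variable (h : X ≃ₜ Icc (0 : ℝ) 1)

def initialSegment (t : Icc (0 : ℝ) 1) : NonemptyCompacts X :=
  (nonemptyCompactsIic t).map h.symm h.symm.continuous

theorem coe_initialSegment (t : Icc (0 : ℝ) 1) : (initialSegment h t : Set X) = h ⁻¹' Iic t :=
  congrFun h.image_symm _

theorem continuous_initialSegment : Continuous (initialSegment h) :=
  (CompactSpace.uniformContinuous_of_continuous h.symm.continuous).nonemptyCompacts_map
    |>.continuous.comp continuous_nonemptyCompactsIic

theorem initialSegment_mem_NCstar (t : Icc (0 : ℝ) 1) : initialSegment h t ∈ NCstar X := by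
  refine ⟨⟨(initialSegment h t).nonempty, ?_⟩, ?_⟩ <;> rw [coe_initialSegment]
  · exact h.isPreconnected_preimage.2 isPreconnected_Iic
  · rw [← preimage_compl, compl_Iic]
    exact h.isPreconnected_preimage.2 isPreconnected_Ioi

theorem mem_range_initialSegment {C : NonemptyCompacts X} (hC : C ∈ NCstar X)
    (h0 : h.symm 0 ∈ (C : Set X)) : C ∈ range (initialSegment h) := by
  set S := h '' C
  have hSpre : IsPreconnected S := hC.1.isPreconnected.image h h.continuous.continuousOn
  have hsup : sSup S ∈ S := (C.isCompact.image h.continuous).sSup_mem (C.nonempty.image h)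
  have h0S : 0 ∈ S := ⟨_, h0, h.apply_symm_apply 0⟩
  refine ⟨sSup S, NonemptyCompacts.ext ?_⟩
  rw [coe_initialSegment, ← h.preimage_image C]
  congr 1
  exact subset_antisymm (fun x hx => hSpre.Icc_subset h0S hsup ⟨unitInterval.nonneg', hx⟩)
    fun x hx => le_sSup hx

theorem zero_mem_or_one_mem {C : NonemptyCompacts X} (hC : C ∈ NCstar X) :
    h.symm 0 ∈ (C : Set X) ∨ h.symm 1 ∈ (C : Set X) := by
  by_contra! h01
  obtain ⟨x, hx⟩ := C.nonempty
  have hcompl := (hC.2.image h h.continuous.continuousOn).Icc_subset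
    ⟨_, h01.1, h.apply_symm_apply 0⟩ ⟨_, h01.2, h.apply_symm_apply 1⟩
    ⟨unitInterval.nonneg' (t := h x), unitInterval.le_one'⟩
  obtain ⟨y, hy, hyx⟩ := hcompl
  exact hy (h.injective hyx ▸ hx)

end Interval

theorem isConnected_NCstar_of_homeomorph [MetricSpace X] (h : X ≃ₜ Icc (0 : ℝ) 1) :
    IsConnected (NCstar X) := by
  set h' := h.trans unitInterval.symmHomeomorph
  have hsymm : h'.symm 0 = h.symm 1 := by simp [h']
  have hNC : NCstar X = range (initialSegment h) ∪ range (initialSegment h') := by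
    refine subset_antisymm (fun C hC => ?_) (union_subset ?_ ?_)
    · rcases zero_mem_or_one_mem h hC with h0 | h1
      · exact Or.inl (mem_range_initialSegment h hC h0)
      · exact Or.inr (mem_range_initialSegment h' hC (hsymm ▸ h1))
    · rintro _ ⟨t, rfl⟩
      exact initialSegment_mem_NCstar h t
    · rintro _ ⟨t, rfl⟩
      exact initialSegment_mem_NCstar h' t
  have htop : initialSegment h 1 = initialSegment h' 1 := by
    ext x
    simp only [coe_initialSegment, mem_preimage, mem_Iic]
    exact iff_of_true unitInterval.le_one' unitInterval.le_one'
  rw [hNC]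
  exact (isConnected_range (continuous_initialSegment h)).union ⟨_, ⟨1, rfl⟩, ⟨1, htop.symm⟩⟩
    (isConnected_range (continuous_initialSegment h'))

theorem NCstar_connected_iff_interval_general [MetricSpace X] [ConnectedSpace X]
    (hG : IsFiniteGraph X) (hT : NoSimpleClosedCurve X) :
    IsConnected (NCstar X) ↔ Nonempty (X ≃ₜ Set.Icc (0 : ℝ) 1) := by
  obtain ⟨n, A, e₀, e₁, harc, hcov, hint⟩ := hG
  have hA : IsArcCover A e₀ e₁ := ⟨harc, hcov, hint⟩
  refine ⟨fun hconn => ?_, fun ⟨h⟩ => isConnected_NCstar_of_homeomorph h⟩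
  by_cases h3 : NoTriplePoint A
  · obtain ⟨x, y, hxy⟩ := hA.exists_isArc_univ hT h3
    exact hxy.nonempty_homeomorph_of_univ
  · simp only [NoTriplePoint, not_forall, not_or] at h3
    obtain ⟨p, a, b, c, ha, hb, hc, hab, hac, hbc⟩ := h3
    exact absurd hconn (hA.not_isConnected_NCstar hT ha hb hc hab hac hbc)

theorem NCstar_connected_iff_interval [MetricSpace X] [CompactSpace X] [ConnectedSpace X] [Nontrivial X]
    (hG : IsFiniteGraph X) (hT : NoSimpleClosedCurve X) :
    IsConnected (NCstar X) ↔ Nonempty (X ≃ₜ Set.Icc (0 : ℝ) 1) :=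
  NCstar_connected_iff_interval_general hG hT
end

section
/- If X is a locally connected continuum, then the set S(X) of all closed nonempty subsets A of X such that X \ A is disconnected is an F_σ subset of the hyperspace 2^X with the Hausdorff metric; consequently NC*(X) is a G_δ subset of C(X), and hence NC*(X) is a Polish space. -/
open TopologicalSpace Topology Metric Set

universe u
variable {X : Type u}

/-! A compactum `A` has disconnected complement iff two points off `A` lie in different
components of `Aᶜ`; bounding their distances to `A` below by `1 / (n + 1)` writes the set of
such `A` as a countable union. Each piece is closed: if `A` is the Hausdorff limit of such
`Aₖ` whose witnesses converge to `x, y`, and `x, y` were in one component of `Aᶜ`, then by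
local connectedness they are in one component `O` of `{z | ε < infDist z A}` for some
`ε > 0`. This `O` is open, so it contains the witnesses of `Aₖ` for large `k`, and it misses
`Aₖ` as soon as `dist Aₖ A < ε`. Connected compacta form a closed set in the compact
hyperspace, and a Gδ subset of a Polish space is Polish.
-/

open Filter

theorem IsGδ.polishSpace {α : Type*} [TopologicalSpace α] [PolishSpace α] {s : Set α}
    (hs : IsGδ s) : PolishSpace s := by
  obtain ⟨U, hUo, rfl⟩ := hs.eq_iInter_nat
  have : ∀ n, PolishSpace (U n) := fun n => (hUo n).polishSpace
  -- `⋂ n, U n` is homeomorphic to the diagonal of `∀ n, U n`, which is closed.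
  let f : (⋂ n, U n : Set α) → ∀ n, U n := fun x n => ⟨x, mem_iInter.1 x.2 n⟩
  have hf : Continuous f := continuous_pi fun n => continuous_subtype_val.subtype_mk _
  have hrange : range f = {p | ∀ n, (p n : α) = p 0} := by
    refine Subset.antisymm (range_subset_iff.2 fun x n => rfl) fun p hp => ?_
    exact ⟨⟨p 0, mem_iInter.2 fun n => hp n ▸ (p n).2⟩, funext fun n => Subtype.ext (hp n).symm⟩
  have hfe : IsClosedEmbedding f := by
    refine ⟨.of_comp hf ((continuous_apply 0).subtype_val) IsEmbedding.subtypeVal, ?_⟩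
    rw [hrange, ofPred_forall]
    exact isClosed_iInter fun n =>
      isClosed_eq (continuous_apply n).subtype_val (continuous_apply 0).subtype_val
  exact hfe.polishSpace

theorem exists_mem_connectedComponentIn_of_directed [TopologicalSpace X]
    [LocallyConnectedSpace X] {ι : Type*} {U : ι → Set X} (hUo : ∀ i, IsOpen (U i))
    (hU : Directed (· ⊆ ·) U) {C : Set X} (hC : IsPreconnected C) (hCU : C ⊆ ⋃ i, U i)
    {x y : X} (hx : x ∈ C) (hy : y ∈ C) : ∃ i, y ∈ connectedComponentIn (U i) x := by
  refine hC.induction₂' (fun a b => ∃ i, b ∈ connectedComponentIn (U i) a) (fun a ha => ?_)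
    (fun a b c _ _ _ ⟨i, hab⟩ ⟨j, hbc⟩ => ?_) hx hy
  · obtain ⟨i, hai⟩ := mem_iUnion.1 (hCU ha)
    have hO := (hUo i).connectedComponentIn (x := a)
    filter_upwards [nhdsWithin_le_nhds (hO.mem_nhds (mem_connectedComponentIn hai))] with b hb
    exact ⟨⟨i, hb⟩, i, connectedComponentIn_eq hb ▸ mem_connectedComponentIn hai⟩
  · obtain ⟨k, hik, hjk⟩ := hU i j
    refine ⟨k, ?_⟩
    rw [connectedComponentIn_eq (connectedComponentIn_mono a hik hab)]
    exact connectedComponentIn_mono b hjk hbc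

section Hyperspace

variable [MetricSpace X]

theorem TopologicalSpace.NonemptyCompacts.subset_thickening_of_dist_lt
    {A B : NonemptyCompacts X} {δ : ℝ} (h : dist A B < δ) : (A : Set X) ⊆ thickening δ B :=
  fun _ ha => mem_thickening_iff.2 (exists_dist_lt_of_hausdorffDist_lt ha h (edist_ne_top A B))

theorem TopologicalSpace.NonemptyCompacts.isClosed_setOf_isConnected :
    IsClosed {A : NonemptyCompacts X | IsConnected (A : Set X)} := by
  refine isOpen_compl_iff.1 (Metric.isOpen_iff.2 fun A hA => ?_)
  obtain ⟨u, v, hu, hv, hAuv, ⟨a, hau⟩, ⟨b, hbv⟩, huv⟩ : ∃ u v, IsClosed u ∧ IsClosed v ∧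
      (A : Set X) ⊆ u ∪ v ∧ ((A : Set X) ∩ u).Nonempty ∧ ((A : Set X) ∩ v).Nonempty ∧
      ¬ ((A : Set X) ∩ (u ∩ v)).Nonempty := by
    by_contra! h
    exact hA ⟨A.nonempty, isPreconnected_closed_iff.2 h⟩
  have hdisj : Disjoint ((A : Set X) ∩ u) ((A : Set X) ∩ v) :=
    disjoint_left.2 fun z hzu hzv => huv ⟨z, hzu.1, hzu.2, hzv.2⟩
  obtain ⟨δ, hδ, hthick⟩ :=
    hdisj.exists_thickenings (A.isCompact.inter_right hu) (A.isCompact.isClosed.inter hv)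
  refine ⟨δ, hδ, fun B hB hBconn => ?_⟩
  rw [mem_ball] at hB
  have hcover :
      (B : Set X) ⊆ thickening δ ((A : Set X) ∩ u) ∪ thickening δ ((A : Set X) ∩ v) := by
    rw [← thickening_union, ← inter_union_distrib_left, inter_eq_left.2 hAuv]
    exact NonemptyCompacts.subset_thickening_of_dist_lt hB
  have hmeet : ∀ w, ((A : Set X) ∩ w).Nonempty →
      ((B : Set X) ∩ thickening δ ((A : Set X) ∩ w)).Nonempty := fun w ⟨z, hzA, hzw⟩ => by
    obtain ⟨y, hyB, hzy⟩ := mem_thickening_iff.1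
      (NonemptyCompacts.subset_thickening_of_dist_lt (by rwa [dist_comm]) hzA)
    exact ⟨y, hyB, mem_thickening_iff.2 ⟨_, ⟨hzA, hzw⟩, by rwa [dist_comm]⟩⟩
  obtain ⟨z, -, hz⟩ := hBconn.isPreconnected _ _ isOpen_thickening isOpen_thickening hcover
    (hmeet u ⟨a, hau⟩) (hmeet v ⟨b, hbv⟩)
  exact disjoint_left.1 hthick hz.1 hz.2

def separatingSetsAt (X : Type u) [MetricSpace X] (r : ℝ) : Set (NonemptyCompacts X) :=
  {A | ∃ x y, r ≤ infDist x A ∧ r ≤ infDist y A ∧ y ∉ connectedComponentIn (A : Set X)ᶜ x}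

theorem setOf_not_isPreconnected_compl_eq_iUnion :
    {A : NonemptyCompacts X | ¬ IsPreconnected ((A : Set X)ᶜ)} =
      ⋃ n : ℕ, separatingSetsAt X (1 / (n + 1)) := by
  ext A
  have hpos : ∀ {z}, z ∈ (A : Set X)ᶜ ↔ 0 < infDist z A :=
    A.isCompact.isClosed.notMem_iff_infDist_pos A.nonempty
  simp only [mem_ofPred_eq, mem_iUnion]
  constructor
  · intro hA
    obtain ⟨x, hx, y, hy, hxy⟩ : ∃ x ∈ (A : Set X)ᶜ, ∃ y ∈ (A : Set X)ᶜ,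
        y ∉ connectedComponentIn (A : Set X)ᶜ x := by
      by_contra! h
      exact hA (isPreconnected_of_forall_pair fun x hx y hy =>
        ⟨_, connectedComponentIn_subset _ _, mem_connectedComponentIn hx, h x hx y hy,
          isPreconnected_connectedComponentIn⟩)
    obtain ⟨n, hn⟩ := exists_nat_one_div_lt (lt_min (hpos.1 hx) (hpos.1 hy))
    exact ⟨n, x, y, (hn.trans_le (min_le_left _ _)).le, (hn.trans_le (min_le_right _ _)).le, hxy⟩
  · rintro ⟨n, x, y, hx, hy, hxy⟩ hA
    have hr : (0 : ℝ) < 1 / (n + 1) := Nat.one_div_pos_of_nat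
    exact hxy (hA.subset_connectedComponentIn (hpos.2 (hr.trans_le hx)) Subset.rfl
      (hpos.2 (hr.trans_le hy)))

theorem exists_mem_connectedComponentIn_lt_infDist [LocallyConnectedSpace X] {A : Set X}
    (hA : IsClosed A) (hA' : A.Nonempty) {x y : X} (hy : y ∈ connectedComponentIn Aᶜ x) :
    ∃ ε > 0, y ∈ connectedComponentIn {z | ε < infDist z A} x := by
  let U : Ioi (0 : ℝ) → Set X := fun ε => {z | (ε : ℝ) < infDist z A}
  have hUdir : Directed (· ⊆ ·) U := fun ε δ =>
    ⟨⟨min ε δ, lt_min (mem_Ioi.1 ε.2) δ.2⟩, fun _ => (min_le_left (ε : ℝ) δ).trans_lt,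
      fun _ => (min_le_right (ε : ℝ) δ).trans_lt⟩
  have hcover : Aᶜ ⊆ ⋃ ε, U ε := fun z hz =>
    have hpos := (hA.notMem_iff_infDist_pos hA').1 hz
    mem_iUnion.2 ⟨⟨infDist z A / 2, half_pos hpos⟩, half_lt_self hpos⟩
  obtain ⟨⟨ε, hε⟩, h⟩ := exists_mem_connectedComponentIn_of_directed
    (fun _ => isOpen_lt continuous_const (continuous_infDist_pt A)) hUdir
    isPreconnected_connectedComponentIn (connectedComponentIn_subset _ _ |>.trans hcover)
    (mem_connectedComponentIn (connectedComponentIn_nonempty_iff.1 ⟨y, hy⟩)) hy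
  exact ⟨ε, hε, h⟩

theorem isClosed_separatingSetsAt [CompactSpace X] [LocallyConnectedSpace X] (r : ℝ) :
    IsClosed (separatingSetsAt X r) := by
  refine isClosed_of_closure_subset fun A hA => ?_
  obtain ⟨As, hAs, hlim⟩ := mem_closure_iff_seq_limit.1 hA
  choose xs ys hxs hys hsep using hAs
  obtain ⟨p, -, φ, hφ, hp⟩ :=
    isCompact_univ.tendsto_subseq (x := fun n => (xs n, ys n)) fun _ => mem_univ _
  have hAφ := hlim.comp hφ.tendsto_atTop
  have hx : Tendsto (xs ∘ φ) atTop (𝓝 p.1) := hp.fst_nhds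
  have hy : Tendsto (ys ∘ φ) atTop (𝓝 p.2) := hp.snd_nhds
  have hinfDist {zs : ℕ → X} {z : X} (hz : Tendsto zs atTop (𝓝 z)) :
      Tendsto (fun n => infDist (zs n) (As (φ n))) atTop (𝓝 (infDist z A)) := by
    have hc : Continuous fun q : X × NonemptyCompacts X => infDist q.1 (q.2 : Set X) :=
      lipschitz_infDist.continuous
    exact ((hc.tendsto (z, A)).comp (hz.prodMk_nhds hAφ) :)
  refine ⟨p.1, p.2, ge_of_tendsto' (hinfDist hx) fun n => hxs (φ n),
    ge_of_tendsto' (hinfDist hy) fun n => hys (φ n), fun hyx => ?_⟩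
  obtain ⟨ε, hε, hyε⟩ :=
    exists_mem_connectedComponentIn_lt_infDist A.isCompact.isClosed A.nonempty hyx
  let O := connectedComponentIn {z | ε < infDist z A} p.1
  have hOo : IsOpen O :=
    (isOpen_lt continuous_const (continuous_infDist_pt _)).connectedComponentIn
  have hxO : p.1 ∈ O := mem_connectedComponentIn (connectedComponentIn_nonempty_iff.1 ⟨_, hyε⟩)
  obtain ⟨n, hn, hxn, hyn⟩ := ((Metric.tendsto_nhds.1 hAφ ε hε).and
    ((hx.eventually (hOo.mem_nhds hxO)).and (hy.eventually (hOo.mem_nhds hyε)))).exists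
  refine hsep (φ n) (isPreconnected_connectedComponentIn.subset_connectedComponentIn hxn ?_ hyn)
  intro z hzO hzA
  have hzε : ε < infDist z A := connectedComponentIn_subset _ p.1 hzO
  exact hzε.not_gt ((mem_thickening_iff_infDist_lt A.nonempty).1
    (NonemptyCompacts.subset_thickening_of_dist_lt hn hzA))

end Hyperspace

theorem cut_sets_Fsigma_and_NCstar_polish_general [MetricSpace X] [CompactSpace X] [LocallyConnectedSpace X] :
    (∃ F : ℕ → Set (NonemptyCompacts X), (∀ k, IsClosed (F k)) ∧
      {A : NonemptyCompacts X | ¬ IsPreconnected ((A : Set X)ᶜ)} = ⋃ k, F k) ∧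
    IsGδ {A : {B : NonemptyCompacts X // IsConnected (B : Set X)} |
      IsPreconnected ((A.1 : Set X)ᶜ)} ∧
    PolishSpace ↥(NCstar X) := by
  have hclosed (n : ℕ) := isClosed_separatingSetsAt (X := X) (1 / (n + 1))
  have hGδ : IsGδ {A : NonemptyCompacts X | IsPreconnected ((A : Set X)ᶜ)} := by
    have h : {A : NonemptyCompacts X | IsPreconnected ((A : Set X)ᶜ)} =
        ⋂ n : ℕ, (separatingSetsAt X (1 / (n + 1)))ᶜ := by
      simp only [← compl_iUnion, ← setOf_not_isPreconnected_compl_eq_iUnion, compl_ofPred, not_not]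
    exact h ▸ .iInter_of_isOpen fun n => (hclosed n).isOpen_compl
  refine ⟨⟨_, hclosed, setOf_not_isPreconnected_compl_eq_iUnion⟩,
    hGδ.preimage continuous_subtype_val, ?_⟩
  exact (NonemptyCompacts.isClosed_setOf_isConnected.isGδ.inter hGδ).polishSpace

theorem cut_sets_Fsigma_and_NCstar_polish [MetricSpace X] [CompactSpace X] [ConnectedSpace X] [Nontrivial X] [LocallyConnectedSpace X] :
    (∃ F : ℕ → Set (NonemptyCompacts X), (∀ k, IsClosed (F k)) ∧
      {A : NonemptyCompacts X | ¬ IsPreconnected ((A : Set X)ᶜ)} = ⋃ k, F k) ∧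
    IsGδ {A : {B : NonemptyCompacts X // IsConnected (B : Set X)} |
      IsPreconnected ((A.1 : Set X)ᶜ)} ∧
    PolishSpace ↥(NCstar X) :=
  cut_sets_Fsigma_and_NCstar_polish_general
end

section
/- A nonempty topological space X is homeomorphic to the space of irrational numbers ℝ \ ℚ if and only if X is separable, completely metrizable, zero-dimensional, and nowhere compact (no nonempty open subset has compact closure). -/
open TopologicalSpace Topology Metric Set

universe u
variable {X : Type u}

def NowhereCompact (Y : Type*) [TopologicalSpace Y] : Prop :=
  ∀ U : Set Y, IsOpen U → U.Nonempty → ¬ IsCompact (closure U)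

/-!
In a complete separable metric space that is zero-dimensional and has no nonempty compact open
sets, every nonempty clopen set is not totally bounded, so any cover of it by disjoint clopen sets
of small diameter has infinitely many nonempty pieces: it splits into countably infinitely many
nonempty clopen pieces of diameter as small as we like. Iterating the splitting yields a scheme of
clopen sets indexed by finite sequences of naturals whose branches shrink to points, and following
the branches is a homeomorphism from the Baire space `ℕ → ℕ`. The irrationals satisfy the same
hypotheses, since both they and their complement are dense in `ℝ`, so both spaces are homeomorphic
to `ℕ → ℕ`.
-/

open CantorScheme PiNat Function
open scoped ENNReal

theorem polishSpace_iInter {α ι : Type*} [TopologicalSpace α] [T2Space α] [Countable ι]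
    [Nonempty ι] {s : ι → Set α} (hs : ∀ i, PolishSpace (s i)) : PolishSpace ↥(⋂ i, s i) := by
  obtain ⟨i₀⟩ := ‹Nonempty ι›
  let f : ↥(⋂ i, s i) → ∀ i, s i := fun x i => ⟨x, mem_iInter.1 x.2 i⟩
  have hf : Continuous f := continuous_pi fun i => continuous_subtype_val.subtype_mk _
  have hval : Continuous fun g : (∀ i, s i) => (g i₀ : α) :=
    continuous_subtype_val.comp (continuous_apply i₀)
  have hrange : range f = ⋂ (i) (j), {g | (g i : α) = g j} := by
    ext g
    simp only [mem_range, mem_iInter, mem_ofPred_eq]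
    refine ⟨by rintro ⟨x, rfl⟩ i j; rfl, fun hg => ?_⟩
    refine ⟨⟨g i₀, mem_iInter.2 fun i => hg i i₀ ▸ (g i).2⟩, funext fun i => ?_⟩
    exact Subtype.ext (hg i₀ i)
  refine IsClosedEmbedding.polishSpace (f := f)
    ⟨IsEmbedding.of_comp hf hval IsEmbedding.subtypeVal, ?_⟩
  rw [hrange]
  exact isClosed_iInter fun i => isClosed_iInter fun j =>
    isClosed_eq (continuous_subtype_val.comp (continuous_apply i))
      (continuous_subtype_val.comp (continuous_apply j))

instance polishSpace_irrational : PolishSpace {x : ℝ // Irrational x} := by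
  have h : {x : ℝ | Irrational x} = ⋂ q : ℚ, {(q : ℝ)}ᶜ := by
    ext
    simp [Irrational, eq_comm]
  have := polishSpace_iInter fun q : ℚ => (isOpen_compl_singleton (x := (q : ℝ))).polishSpace
  exact (Homeomorph.setCongr h).isClosedEmbedding.polishSpace

theorem ZeroDim.of_isEmbedding {A B : Type*} [TopologicalSpace A] [TopologicalSpace B]
    {f : A → B} (hf : IsEmbedding f) (h : ZeroDim B) : ZeroDim A := by
  intro x U hU hxU
  obtain ⟨V, hV, rfl⟩ := hf.isInducing.isOpen_iff.1 hU
  obtain ⟨W, hW, hxW, hWV⟩ := h (f x) V hV hxU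
  exact ⟨f ⁻¹' W, hW.preimage hf.continuous, hxW, preimage_mono hWV⟩

theorem NowhereCompact.of_homeomorph {A B : Type*} [TopologicalSpace A] [TopologicalSpace B]
    (e : A ≃ₜ B) (h : NowhereCompact B) : NowhereCompact A := by
  intro U hU hne hK
  apply h (e '' U) (e.isOpenMap U hU) (hne.image e)
  rw [← e.image_closure]
  exact hK.image e.continuous

theorem zeroDim_of_dense_compl {α : Type*} [LinearOrder α] [TopologicalSpace α] [OrderTopology α]
    [DenselyOrdered α] [NoMinOrder α] [NoMaxOrder α] {s : Set α} (hs : Dense sᶜ) : ZeroDim s := by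
  intro y U hU hyU
  obtain ⟨V, hV, rfl⟩ := isOpen_induced_iff.1 hU
  obtain ⟨⟨l, u⟩, ⟨hly, hyu⟩, hlu⟩ := (nhds_basis_Ioo (y : α)).mem_iff.1 (hV.mem_nhds hyU)
  obtain ⟨a, ha, hla, hay⟩ := hs.exists_between hly
  obtain ⟨b, hb, hyb, hbu⟩ := hs.exists_between hyu
  have hIoo : ((↑) ⁻¹' Ioo a b : Set s) = (↑) ⁻¹' Icc a b := by
    ext ⟨x, hx⟩
    refine ⟨fun h => Ioo_subset_Icc_self h, fun h => ⟨h.1.lt_of_ne ?_, h.2.lt_of_ne ?_⟩⟩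
    · rintro rfl; exact ha hx
    · rintro rfl; exact hb hx
  refine ⟨(↑) ⁻¹' Ioo a b, ⟨?_, isOpen_Ioo.preimage continuous_subtype_val⟩, ⟨hay, hyb⟩,
    fun x hx => hlu ⟨hla.trans hx.1, hx.2.trans hbu⟩⟩
  rw [hIoo]
  exact isClosed_Icc.preimage continuous_subtype_val

theorem nowhereCompact_of_dense_of_dense_compl {α : Type*} [TopologicalSpace α] [T2Space α]
    {s : Set α} (hs : Dense s) (hs' : Dense sᶜ) : NowhereCompact s := by
  rintro U hU ⟨y, hyU⟩ hK
  obtain ⟨V, hV, rfl⟩ := isOpen_induced_iff.1 hU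
  have hVs : V ⊆ s :=
    calc V ⊆ closure (V ∩ s) := hs.open_subset_closure_inter hV
      _ = closure ((↑) '' ((↑) ⁻¹' V : Set s)) := by rw [image_preimage_eq_inter_range,
          Subtype.range_coe]
      _ ⊆ (↑) '' closure ((↑) ⁻¹' V : Set s) :=
          closure_minimal (image_mono subset_closure) (hK.image continuous_subtype_val).isClosed
      _ ⊆ s := Subtype.coe_image_subset _ _
  obtain ⟨z, hzV, hzs⟩ := hs'.inter_open_nonempty V hV ⟨y, hyU⟩
  exact hzs (hVs hzV)

theorem dense_compl_setOf_irrational : Dense {x : ℝ | Irrational x}ᶜ := by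
  have h : {x : ℝ | Irrational x}ᶜ = range ((↑) : ℚ → ℝ) := by
    ext
    simp [Irrational]
  exact h ▸ Rat.denseRange_cast

theorem zeroDim_irrational : ZeroDim {x : ℝ // Irrational x} :=
  zeroDim_of_dense_compl dense_compl_setOf_irrational

theorem nowhereCompact_irrational : NowhereCompact {x : ℝ // Irrational x} :=
  nowhereCompact_of_dense_of_dense_compl dense_irrational dense_compl_setOf_irrational

section ClopenPartition

variable {Z : Type*} [PseudoEMetricSpace Z]

structure IsClopenPartition (C : Set Z) (ε : ℝ≥0∞) (D : ℕ → Set Z) : Prop where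
  nonempty : ∀ n, (D n).Nonempty
  isClopen : ∀ n, IsClopen (D n)
  ediam_le : ∀ n, ediam (D n) ≤ ε
  pairwise_disjoint : Pairwise (Disjoint on D)
  iUnion_eq : ⋃ n, D n = C

theorem ZeroDim.exists_disjoint_clopen_cover [SecondCountableTopology Z] (hZD : ZeroDim Z)
    {C : Set Z} (hC : IsOpen C) {ε : ℝ≥0∞} (hε : 0 < ε) :
    ∃ D : ℕ → Set Z, (∀ n, IsClopen (D n) ∧ ediam (D n) ≤ ε) ∧ Pairwise (Disjoint on D) ∧
      ⋃ n, D n = C := by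
  set S := {V : Set Z | IsClopen V ∧ ediam V ≤ ε ∧ V ⊆ C}
  have hS : ⋃₀ S = C := by
    refine subset_antisymm (sUnion_subset fun V hV => hV.2.2) fun y hy => ?_
    obtain ⟨V, hV, hyV, hVsub⟩ := hZD y (C ∩ eball y (ε / 2)) (hC.inter isOpen_eball)
      ⟨hy, mem_eball_self (ENNReal.half_pos hε.ne')⟩
    refine ⟨V, ⟨hV, ediam_le fun a ha b hb => ?_, fun x hx => (hVsub hx).1⟩, hyV⟩
    calc edist a b ≤ edist a y + edist b y := edist_triangle_right a b y
      _ ≤ ε / 2 + ε / 2 := add_le_add (hVsub ha).2.le (hVsub hb).2.le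
      _ = ε := ENNReal.add_halves ε
  obtain ⟨T, hTc, hTS, hTU⟩ := isOpen_sUnion_countable S fun V hV => hV.1.isOpen
  obtain ⟨W, hW⟩ := (hTc.insert ∅).exists_eq_range (insert_nonempty _ _)
  have hWS : ∀ n, W n ∈ S := by
    have : range W ⊆ S := hW ▸ insert_subset ⟨isClopen_empty, by simp, empty_subset C⟩ hTS
    exact fun n => this (mem_range_self n)
  have hWU : ⋃ n, W n = C := by
    rw [← sUnion_range, ← hW, sUnion_insert, empty_union, hTU, hS]
  refine ⟨disjointed W, fun n => ⟨?_, ?_⟩, disjoint_disjointed W, iUnion_disjointed.trans hWU⟩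
  · exact Nat.disjointedRec (fun t i ht => ht.diff (hWS i).1) (hWS n).1
  · exact (ediam_mono (disjointed_subset W n)).trans (hWS n).2.1

theorem ZeroDim.exists_disjoint_clopen_cover_infinite [SecondCountableTopology Z]
    (hZD : ZeroDim Z) {C : Set Z} (hC : IsOpen C) (hCtb : ¬ TotallyBounded C) {ε : ℝ≥0∞}
    (hε : 0 < ε) :
    ∃ D : ℕ → Set Z, (∀ n, IsClopen (D n) ∧ ediam (D n) ≤ ε) ∧ Pairwise (Disjoint on D) ∧
      ⋃ n, D n = C ∧ {n | (D n).Nonempty}.Infinite := by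
  obtain ⟨δ, hδ, hnet⟩ : ∃ δ > 0, ∀ t : Set Z, t.Finite → ¬ C ⊆ ⋃ y ∈ t, eball y δ := by
    simpa [EMetric.totallyBounded_iff] using hCtb
  obtain ⟨r, hr, hrδ⟩ := exists_between hδ
  obtain ⟨D, hD, hdisj, hU⟩ := hZD.exists_disjoint_clopen_cover hC (lt_min hε hr)
  refine ⟨D, fun n => ⟨(hD n).1, (hD n).2.trans (min_le_left _ _)⟩, hdisj, hU, fun hfin => ?_⟩
  -- finitely many nonempty pieces of diameter `< δ` would give a finite `δ`-net of `C`
  have := hfin.to_subtype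
  choose c hc using fun n : {n | (D n).Nonempty} => n.2
  refine hnet (range c) (finite_range c) fun x hx => ?_
  obtain ⟨n, hn⟩ := mem_iUnion.1 (hU.symm ▸ hx)
  refine mem_biUnion (mem_range_self ⟨n, x, hn⟩) ?_
  calc edist x (c ⟨n, x, hn⟩) ≤ ediam (D n) := edist_le_ediam_of_mem hn (hc ⟨n, x, hn⟩)
    _ ≤ r := (hD n).2.trans (min_le_right _ _)
    _ < δ := hrδ

theorem exists_isClopenPartition [CompleteSpace Z] [SecondCountableTopology Z]
    (hZD : ZeroDim Z) (hNC : NowhereCompact Z) {C : Set Z} (hC : IsClopen C) (hne : C.Nonempty)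
    {ε : ℝ≥0∞} (hε : 0 < ε) : ∃ D, IsClopenPartition C ε D := by
  have hCtb : ¬ TotallyBounded C := fun htb => hNC C hC.isOpen hne <| by
    rw [hC.isClosed.closure_eq]
    exact htb.isCompact_of_isClosed hC.isClosed
  obtain ⟨D, hD, hdisj, hU, hinf⟩ := hZD.exists_disjoint_clopen_cover_infinite hC.isOpen hCtb hε
  set p : ℕ → Prop := fun n => (D n).Nonempty
  refine ⟨D ∘ Nat.nth p, fun k => Nat.nth_mem_of_infinite hinf k, fun k => (hD _).1,
    fun k => (hD _).2, hdisj.comp_of_injective (Nat.nth_injective hinf), ?_⟩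
  calc ⋃ k, D (Nat.nth p k) = ⋃ n ∈ range (Nat.nth p), D n := biUnion_range.symm
    _ = ⋃ n, ⋃ (_ : (D n).Nonempty), D n := by rw [Nat.range_nth_of_infinite hinf]; rfl
    _ = C := by simp only [iUnion_nonempty_self, hU]

end ClopenPartition

theorem exists_forall_res {β : Type*} {P : List β → Prop} (h₀ : P [])
    (hstep : ∀ l, P l → ∃ b, P (b :: l)) : ∃ x : ℕ → β, ∀ n, P (res x n) := by
  choose c hc using hstep
  let g : {l // P l} → {l // P l} := fun l => ⟨c l.1 l.2 :: l.1, hc l.1 l.2⟩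
  let L : ℕ → {l // P l} := fun n => g^[n] ⟨[], h₀⟩
  have hres : ∀ n, res (fun k => c (L k).1 (L k).2) n = (L n).1 := by
    intro n
    induction n with
    | zero => rfl
    | succ n ih => rw [res_succ, ih]; simp only [L, iterate_succ_apply']; rfl
  exact ⟨_, fun n => hres n ▸ (L n).2⟩

section PartitionScheme

variable {Z : Type*} [MetricSpace Z]

structure IsClopenPartitionScheme (A : List ℕ → Set Z) : Prop where
  nil : A [] = univ
  nonempty : ∀ l, (A l).Nonempty
  isClopen : ∀ l, IsClopen (A l)
  iUnion_cons : ∀ l, ⋃ n, A (n :: l) = A l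
  disjoint : CantorScheme.Disjoint A
  vanishingDiam : VanishingDiam A

namespace IsClopenPartitionScheme

variable {A : List ℕ → Set Z} (hA : IsClopenPartitionScheme A)
include hA

theorem antitone : CantorScheme.Antitone A := fun l n =>
  hA.iUnion_cons l ▸ subset_iUnion (fun n => A (n :: l)) n

variable [CompleteSpace Z]

theorem inducedMap_fst_eq_univ : (inducedMap A).1 = univ :=
  hA.antitone.closureAntitone (fun l => (hA.isClopen l).isClosed) |>.map_of_vanishingDiam
    hA.vanishingDiam hA.nonempty

noncomputable def map (x : ℕ → ℕ) : Z :=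
  (inducedMap A).2 ⟨x, hA.inducedMap_fst_eq_univ ▸ mem_univ x⟩

theorem map_mem (x : ℕ → ℕ) (n : ℕ) : hA.map x ∈ A (res x n) :=
  CantorScheme.map_mem _ n

theorem continuous_map : Continuous hA.map :=
  hA.vanishingDiam.map_continuous.comp (continuous_id.subtype_mk _)

theorem injective_map : Injective hA.map := fun _ _ h =>
  congrArg Subtype.val (hA.disjoint.map_injective h)

theorem res_eq_of_map_mem {x y : ℕ → ℕ} {n : ℕ} (h : hA.map y ∈ A (res x n)) :
    res y n = res x n := by
  induction n with
  | zero => rfl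
  | succ n ih =>
    rw [res_succ] at h ⊢
    have hn := ih (hA.antitone _ _ h)
    refine hn ▸ congrArg (· :: res x n) (by_contra fun hne => ?_)
    have hy := hA.map_mem y (n + 1)
    rw [res_succ, hn] at hy
    exact (hA.disjoint (res x n) hne).ne_of_mem hy h rfl

theorem eq_map_of_forall_mem {x : ℕ → ℕ} {z : Z} (hz : ∀ n, z ∈ A (res x n)) : hA.map x = z :=
  eq_of_forall_dist_le fun ε hε =>
    let ⟨n, hn⟩ := hA.vanishingDiam.dist_lt ε hε x
    (hn _ (hA.map_mem x n) z (hz n)).le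

theorem surjective_map : Surjective hA.map := fun z =>
  let ⟨x, hx⟩ := exists_forall_res (P := (z ∈ A ·)) (hA.nil ▸ mem_univ z)
    fun l hz => mem_iUnion.1 ((hA.iUnion_cons l).symm ▸ hz)
  ⟨x, hA.eq_map_of_forall_mem hx⟩

theorem image_cylinder (x : ℕ → ℕ) (n : ℕ) : hA.map '' cylinder x n = A (res x n) := by
  refine subset_antisymm ?_ fun z hz => ?_
  · rintro _ ⟨y, hy, rfl⟩
    rw [cylinder_eq_res] at hy
    exact hy ▸ hA.map_mem y n
  · obtain ⟨y, rfl⟩ := hA.surjective_map z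
    exact ⟨y, (cylinder_eq_res x n).symm ▸ hA.res_eq_of_map_mem hz, rfl⟩

theorem isOpenMap_map : IsOpenMap hA.map := by
  rw [(isTopologicalBasis_cylinders fun _ => ℕ).isOpenMap_iff]
  rintro _ ⟨x, n, rfl⟩
  exact hA.image_cylinder x n ▸ (hA.isClopen _).isOpen

noncomputable def homeomorph : (ℕ → ℕ) ≃ₜ Z :=
  (Equiv.ofBijective hA.map ⟨hA.injective_map, hA.surjective_map⟩).toHomeomorphOfContinuousOpen
    hA.continuous_map hA.isOpenMap_map

end IsClopenPartitionScheme

end PartitionScheme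

def schemeOfSplit {α : Type*} (split : Set α → ℕ → ℕ → Set α) : List ℕ → Set α
  | [] => univ
  | n :: l => split (schemeOfSplit split l) l.length n

theorem exists_isClopenPartitionScheme {Z : Type*} [MetricSpace Z] [CompleteSpace Z]
    [SecondCountableTopology Z] [Nonempty Z] (hZD : ZeroDim Z) (hNC : NowhereCompact Z) :
    ∃ A : List ℕ → Set Z, IsClopenPartitionScheme A := by
  have : ∀ (C : Set Z) (k : ℕ), IsClopen C → C.Nonempty →
      ∃ D, IsClopenPartition C ((k : ℝ≥0∞) + 1)⁻¹ D := fun C k hC hne =>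
    exists_isClopenPartition hZD hNC hC hne (by simp)
  choose! split hsplit using this
  set A := schemeOfSplit split
  have hA : ∀ l, IsClopen (A l) ∧ (A l).Nonempty := by
    intro l
    induction l with
    | nil => exact ⟨isClopen_univ, univ_nonempty⟩
    | cons n l ih => exact ⟨(hsplit _ _ ih.1 ih.2).isClopen n, (hsplit _ _ ih.1 ih.2).nonempty n⟩
  have hpart (l : List ℕ) : IsClopenPartition (A l) ((l.length : ℝ≥0∞) + 1)⁻¹ (A <| · :: l) :=
    hsplit _ _ (hA l).1 (hA l).2
  -- for `l = []` the bound is `0⁻¹ = ⊤` in `ℝ≥0∞`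
  have hdiam : ∀ l, ediam (A l) ≤ (l.length : ℝ≥0∞)⁻¹ := by
    rintro (_ | ⟨n, l⟩)
    · simp
    · simpa using (hpart l).ediam_le n
  refine ⟨A, rfl, fun l => (hA l).2, fun l => (hA l).1, fun l => (hpart l).iUnion_eq,
    fun l => (hpart l).pairwise_disjoint, fun x => ?_⟩
  refine tendsto_of_tendsto_of_tendsto_of_le_of_le tendsto_const_nhds
    ENNReal.tendsto_inv_nat_nhds_zero (fun _ => zero_le) fun n => ?_
  simpa only [res_length] using hdiam (res x n)

theorem PolishSpace.nonempty_homeomorph_nat_nat {Y : Type*} [TopologicalSpace Y] [PolishSpace Y]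
    [Nonempty Y] (hZD : ZeroDim Y) (hNC : NowhereCompact Y) : Nonempty ((ℕ → ℕ) ≃ₜ Y) := by
  let := upgradeIsCompletelyMetrizable Y
  obtain ⟨A, hA⟩ := exists_isClopenPartitionScheme hZD hNC
  exact ⟨hA.homeomorph⟩

theorem alexandroff_urysohn (Y : Type*) [TopologicalSpace Y] [Nonempty Y] :
    (PolishSpace Y ∧ ZeroDim Y ∧ NowhereCompact Y) ↔
      Nonempty (Y ≃ₜ {x : ℝ // Irrational x}) := by
  constructor
  · rintro ⟨_, hZD, hNC⟩
    obtain ⟨eY⟩ := PolishSpace.nonempty_homeomorph_nat_nat hZD hNC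
    have : Nonempty {x : ℝ // Irrational x} := ⟨⟨_, irrational_sqrt_two⟩⟩
    obtain ⟨eI⟩ := PolishSpace.nonempty_homeomorph_nat_nat zeroDim_irrational
      nowhereCompact_irrational
    exact ⟨eY.symm.trans eI⟩
  · rintro ⟨e⟩
    exact ⟨e.isClosedEmbedding.polishSpace, zeroDim_irrational.of_isEmbedding e.isEmbedding,
      nowhereCompact_irrational.of_homeomorph e⟩
end

section
/- If a separable metric space X is the union of countably many closed zero-dimensional subspaces, then X is zero-dimensional. -/
open TopologicalSpace Topology Metric Set

universe u
variable {X : Type u}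

/-- In a second countable zero-dimensional space, disjoint closed sets are
separated by a clopen set. -/
lemma clopen_sep {Z : Type*} [TopologicalSpace Z] [SecondCountableTopology Z]
    (hzd : ZeroDim Z) {A B : Set Z} (hAB : Disjoint A B)
    (hA : IsClosed A) (hB : IsClosed B) :
    ∃ E : Set Z, IsClopen E ∧ A ⊆ E ∧ Disjoint E B := by
  classical
  rcases isEmpty_or_nonempty Z with hZ | hZ
  · exact ⟨∅, isClopen_empty, by simp [Set.eq_empty_of_isEmpty A], by simp⟩
  -- for each z, a clopen nbhd disjoint from A or from B
  have hsel : ∀ z : Z, ∃ V : Set Z, IsClopen V ∧ z ∈ V ∧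
      (Disjoint V A ∨ Disjoint V B) := by
    intro z
    have hz : z ∉ A ∨ z ∉ B := by
      by_contra h
      push_neg at h
      exact absurd (hAB.ne_of_mem h.1 h.2) (by simp)
    rcases hz with hz | hz
    · obtain ⟨V, hV, hzV, hVsub⟩ := hzd z Aᶜ hA.isOpen_compl hz
      exact ⟨V, hV, hzV, Or.inl (Set.disjoint_left.2 fun x hx => hVsub hx)⟩
    · obtain ⟨V, hV, hzV, hVsub⟩ := hzd z Bᶜ hB.isOpen_compl hz
      exact ⟨V, hV, hzV, Or.inr (Set.disjoint_left.2 fun x hx => hVsub hx)⟩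
  choose V hVclopen hVmem hVdis using hsel
  obtain ⟨T, hTc, hTeq⟩ := TopologicalSpace.isOpen_iUnion_countable V
    (fun z => (hVclopen z).2)
  have hTuniv : ⋃ z ∈ T, V z = Set.univ := by
    rw [hTeq]
    exact Set.eq_univ_of_forall fun z => Set.mem_iUnion.2 ⟨z, hVmem z⟩
  have hTne : T.Nonempty := by
    rcases hZ with ⟨z₀⟩
    rcases Set.eq_empty_or_nonempty T with h | h
    · exfalso
      have := hTuniv ▸ Set.mem_univ z₀
      simp [h] at this
    · exact h
  obtain ⟨f, hf⟩ := hTc.exists_eq_range hTne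
  set C : ℕ → Set Z := fun n => V (f n) with hC
  have hCclopen : ∀ n, IsClopen (C n) := fun n => hVclopen (f n)
  have hCdis : ∀ n, Disjoint (C n) A ∨ Disjoint (C n) B := fun n => hVdis (f n)
  have hCcov : ∀ z : Z, ∃ n, z ∈ C n := by
    intro z
    have : z ∈ ⋃ t ∈ T, V t := hTuniv ▸ Set.mem_univ z
    rcases Set.mem_iUnion₂.1 this with ⟨t, htT, hzt⟩
    rw [hf] at htT
    rcases htT with ⟨n, rfl⟩
    exact ⟨n, hzt⟩
  set D : ℕ → Set Z := fun n => C n \ ⋃ m ∈ Finset.range n, C m with hD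
  have hDclopen : ∀ n, IsClopen (D n) := by
    intro n
    exact (hCclopen n).diff ((Finset.range n).finite_toSet.isClopen_biUnion
      (fun m _ => hCclopen m))
  have hDmem : ∀ z : Z, z ∈ D (Nat.find (hCcov z)) := by
    intro z
    refine ⟨Nat.find_spec (hCcov z), ?_⟩
    simp only [Set.mem_iUnion, Finset.mem_range, not_exists]
    intro m hm
    exact Nat.find_min (hCcov z) hm
  have hDC : ∀ n, D n ⊆ C n := fun n => Set.diff_subset
  -- disjointness of distinct D's
  have hDdisj : ∀ m n, m ≠ n → Disjoint (D m) (D n) := by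
    intro m n hmn
    wlog h : m < n generalizing m n
    · exact (this n m hmn.symm (by omega)).symm
    refine Set.disjoint_left.2 fun z hzm hzn => ?_
    exact hzn.2 (Set.mem_iUnion₂.2 ⟨m, Finset.mem_range.2 h, hzm.1⟩)
  set S : Set ℕ := {n | Disjoint (C n) B} with hS
  refine ⟨⋃ n ∈ S, D n, ⟨?_, isOpen_biUnion fun n _ => (hDclopen n).2⟩, ?_, ?_⟩
  · -- closed: complement is the union over the complement of S
    have : (⋃ n ∈ S, D n)ᶜ = ⋃ n ∈ Sᶜ, D n := by
      apply Set.eq_of_subset_of_subset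
      · intro z hz
        simp only [Set.mem_compl_iff, Set.mem_iUnion, not_exists] at hz
        set n := Nat.find (hCcov z)
        refine Set.mem_iUnion₂.2 ⟨n, ?_, hDmem z⟩
        intro hnS
        exact hz n hnS (hDmem z)
      · intro z hz
        rcases Set.mem_iUnion₂.1 hz with ⟨n, hnS, hzn⟩
        simp only [Set.mem_compl_iff, Set.mem_iUnion, not_exists]
        intro m hmS hzm
        rcases eq_or_ne m n with rfl | hmn
        · exact hnS hmS
        · exact (hDdisj m n hmn).ne_of_mem hzm hzn rfl
    rw [← isOpen_compl_iff, this]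
    exact isOpen_biUnion fun n _ => (hDclopen n).2
  · intro z hz
    set n := Nat.find (hCcov z)
    have hzD : z ∈ D n := hDmem z
    have hnS : n ∈ S := by
      rcases hCdis n with h | h
      · exact absurd hz (Set.disjoint_left.1 h (hDC n hzD))
      · exact h
    exact Set.mem_iUnion₂.2 ⟨n, hnS, hzD⟩
  · refine Set.disjoint_left.2 fun z hz hzB => ?_
    rcases Set.mem_iUnion₂.1 hz with ⟨n, hnS, hzn⟩
    exact Set.disjoint_left.1 hnS (hDC n hzn) hzB

/-- Key step: disjoint closed sets in a metric space can be put into open sets with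
disjoint closures whose union covers a given closed zero-dimensional subspace. -/
lemma key_step {Y : Type*} [MetricSpace Y] [SecondCountableTopology Y]
    (F : Set Y) (hFcl : IsClosed F) (hFzd : ZeroDim ↥F)
    {A B : Set Y} (hA : IsClosed A) (hB : IsClosed B) (hAB : Disjoint A B) :
    ∃ G H : Set Y, IsOpen G ∧ IsOpen H ∧ A ⊆ G ∧ B ⊆ H ∧
      Disjoint (closure G) (closure H) ∧ F ⊆ G ∪ H := by
  have hA' : IsClosed ((Subtype.val ⁻¹' A : Set ↥F)) := hA.preimage continuous_subtype_val
  have hB' : IsClosed ((Subtype.val ⁻¹' B : Set ↥F)) := hB.preimage continuous_subtype_val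
  have hdis : Disjoint (Subtype.val ⁻¹' A : Set ↥F) (Subtype.val ⁻¹' B) :=
    hAB.preimage _
  obtain ⟨E, hEclopen, hEA, hEB⟩ := clopen_sep hFzd hdis hA' hB'
  have hval := hFcl.isClosedEmbedding_subtypeVal
  have hEcl : IsClosed (Subtype.val '' E : Set Y) := hval.isClosed_iff_image_isClosed.1 hEclopen.1
  have hEccl : IsClosed (Subtype.val '' Eᶜ : Set Y) :=
    hval.isClosed_iff_image_isClosed.1 hEclopen.compl.1
  set A' : Set Y := A ∪ Subtype.val '' E with hA'def
  set B' : Set Y := B ∪ Subtype.val '' Eᶜ with hB'def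
  have hA'cl : IsClosed A' := hA.union hEcl
  have hB'cl : IsClosed B' := hB.union hEccl
  have hdisAB : Disjoint A' B' := by
    rw [Set.disjoint_left]
    rintro x (hx | ⟨⟨x, hxF⟩, hxE, rfl⟩) (hx' | ⟨⟨x', hxF'⟩, hxE', hx'eq⟩)
    · exact Set.disjoint_left.1 hAB hx hx'
    · -- x ∈ A and x = val of element of Eᶜ
      subst hx'eq
      exact hxE' (hEA hx)
    · exact Set.disjoint_left.1 hEB hxE hx'
    · dsimp only at hx'eq
      cases hx'eq
      exact hxE' hxE
  -- two applications of normality to get disjoint closures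
  obtain ⟨G, hGopen, hAG, hGcl⟩ := normal_exists_closure_subset hA'cl
    hB'cl.isOpen_compl (Set.subset_compl_iff_disjoint_right.2 hdisAB)
  obtain ⟨H, hHopen, hBH, hHcl⟩ := normal_exists_closure_subset hB'cl
    isClosed_closure.isOpen_compl (Set.subset_compl_comm.1 hGcl)
  refine ⟨G, H, hGopen, hHopen, (Set.subset_union_left).trans hAG,
    (Set.subset_union_left).trans hBH, ?_, ?_⟩
  · exact Set.disjoint_left.2 fun x hx hx' => (hHcl hx') hx
  · intro x hxF
    by_cases hE : (⟨x, hxF⟩ : ↥F) ∈ E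
    · exact Or.inl (hAG (Or.inr ⟨⟨x, hxF⟩, hE, rfl⟩))
    · exact Or.inr (hBH (Or.inr ⟨⟨x, hxF⟩, hE, rfl⟩))


theorem countable_closed_sum_zeroDim (Y : Type*) [MetricSpace Y]
    [TopologicalSpace.SeparableSpace Y] (F : ℕ → Set Y)
    (hcl : ∀ k, IsClosed (F k)) (hzd : ∀ k, ZeroDim ↥(F k))
    (hcov : (⋃ k, F k) = Set.univ) :
    ZeroDim Y := by
  have : SecondCountableTopology Y := UniformSpace.secondCountable_of_separable Y
  intro y U hU hyU
  classical
  -- invariant predicate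
  set Inv : Set Y × Set Y → Prop := fun q =>
    IsOpen q.1 ∧ IsOpen q.2 ∧ y ∈ q.1 ∧ Uᶜ ⊆ q.2 ∧
      Disjoint (closure q.1) (closure q.2) with hInv
  have key' : ∀ (k : ℕ) (p : {q : Set Y × Set Y // Inv q}),
      ∃ q : Set Y × Set Y, Inv q ∧ closure p.1.1 ⊆ q.1 ∧ closure p.1.2 ⊆ q.2 ∧
        F k ⊆ q.1 ∪ q.2 := by
    rintro k ⟨⟨P, Q⟩, hP, hQ, hyP, hUQ, hdis⟩
    obtain ⟨G, H, hGo, hHo, hPG, hQH, hGH, hFk⟩ :=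
      key_step (F k) (hcl k) (hzd k) isClosed_closure isClosed_closure hdis
    exact ⟨(G, H), ⟨hGo, hHo, hPG (subset_closure hyP),
      hUQ.trans ((subset_closure).trans hQH), hGH⟩, hPG, hQH, hFk⟩
  -- step function
  set step : ℕ → {q : Set Y × Set Y // Inv q} → {q : Set Y × Set Y // Inv q} :=
    fun k p => ⟨(key' k p).choose, (key' k p).choose_spec.1⟩ with hstep
  have stepSpec : ∀ k p, closure p.1.1 ⊆ (step k p).1.1 ∧
      closure p.1.2 ⊆ (step k p).1.2 ∧ F k ⊆ (step k p).1.1 ∪ (step k p).1.2 :=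
    fun k p => (key' k p).choose_spec.2
  -- base pair
  have hbase : ∃ q : Set Y × Set Y, Inv q := by
    obtain ⟨G, H, hGo, hHo, hyG, hUH, hGH, _⟩ :=
      key_step (F 0) (hcl 0) (hzd 0) (isClosed_singleton (x := y)) hU.isClosed_compl
        (Set.disjoint_left.2 (by rintro x rfl hx; exact hx hyU))
    exact ⟨(G, H), hGo, hHo, hyG rfl, hUH, hGH⟩
  set chain : ℕ → {q : Set Y × Set Y // Inv q} :=
    fun k => Nat.rec ⟨hbase.choose, hbase.choose_spec⟩ step k with hchain
  have hchainSucc : ∀ k, chain (k + 1) = step k (chain k) := fun k => rfl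
  -- monotonicity
  have hmono1 : ∀ k j, j ≤ k → (chain j).1.1 ⊆ (chain k).1.1 := by
    intro k
    induction k with
    | zero =>
      intro j hj
      have : j = 0 := by omega
      subst this; exact subset_rfl
    | succ k ih =>
      intro j hj
      rcases Nat.lt_or_ge j (k+1) with h | h
      · exact (ih j (by omega)).trans
          ((subset_closure).trans (stepSpec k (chain k)).1)
      · have : j = k + 1 := by omega
        subst this; exact subset_rfl
  have hmono2 : ∀ k j, j ≤ k → (chain j).1.2 ⊆ (chain k).1.2 := by
    intro k
    induction k with
    | zero =>
      intro j hj
      have : j = 0 := by omega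
      subst this; exact subset_rfl
    | succ k ih =>
      intro j hj
      rcases Nat.lt_or_ge j (k+1) with h | h
      · exact (ih j (by omega)).trans
          ((subset_closure).trans (stepSpec k (chain k)).2.1)
      · have : j = k + 1 := by omega
        subst this; exact subset_rfl
  -- cross disjointness
  have hcross : ∀ j k, Disjoint ((chain j).1.1) ((chain k).1.2) := by
    intro j k
    set m := max j k
    have h1 : (chain j).1.1 ⊆ (chain m).1.1 := hmono1 m j (le_max_left _ _)
    have h2 : (chain k).1.2 ⊆ (chain m).1.2 := hmono2 m k (le_max_right _ _)
    have := (chain m).2.2.2.2.2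
    exact Set.disjoint_left.2 fun x hx hx' =>
      Set.disjoint_left.1 this (subset_closure (h1 hx)) (subset_closure (h2 hx'))
  set V : Set Y := ⋃ k, (chain k).1.1 with hV
  have hVopen : IsOpen V := isOpen_iUnion fun k => (chain k).2.1
  have hVcomp : Vᶜ = ⋃ k, (chain k).1.2 := by
    apply Set.eq_of_subset_of_subset
    · intro x hx
      have hxF : ∃ k, x ∈ F k := by
        have := hcov ▸ Set.mem_univ x
        exact Set.mem_iUnion.1 this
      rcases hxF with ⟨k, hxk⟩
      have := (stepSpec k (chain k)).2.2 hxk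
      rw [← hchainSucc k] at this
      rcases this with h | h
      · exact absurd (Set.mem_iUnion.2 ⟨k+1, h⟩) hx
      · exact Set.mem_iUnion.2 ⟨k+1, h⟩
    · intro x hx hxV
      rcases Set.mem_iUnion.1 hx with ⟨k, hxk⟩
      rcases Set.mem_iUnion.1 hxV with ⟨j, hxj⟩
      exact Set.disjoint_left.1 (hcross j k) hxj hxk
  refine ⟨V, ⟨?_, hVopen⟩, ?_, ?_⟩
  · rw [← isOpen_compl_iff, hVcomp]
    exact isOpen_iUnion fun k => (chain k).2.2.1
  · exact Set.mem_iUnion.2 ⟨0, (chain 0).2.2.2.1⟩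
  · intro x hxV
    by_contra hxU
    have : x ∈ Vᶜ := by
      rw [hVcomp]
      exact Set.mem_iUnion.2 ⟨0, (chain 0).2.2.2.2.1 hxU⟩
    exact this hxV
end
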